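/- arXiv:1808.10647 — 6 statements merged into one kernel-verified Lean document; each statement's English description precedes it below -/
import Mathlib

section
/- Let M be an m×n matrix with integer entries such that the Euclidean norm of every column of M is at most t (with t ≥ 1). Then the torsion subgroup of the cokernel ℤ^m / M(ℤ^n) is finite of cardinality at most t^r, where r is the rank of M over ℚ. -/
open Matrix
open scoped RealInnerProductSpace

section Aux

/-- Gram determinant is a square of a number bounded by the product of the norms
(Hadamard's inequality). -/
lemma aux_gram_sq {k : ℕ} {E : Type*} [NormedAddCommGroup E]
    [InnerProductSpace ℝ E] (v : Fin k → E) (hv : LinearIndependent ℝ v) :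
    ∃ D : ℝ, (Matrix.of fun i j => ⟪v i, v j⟫).det = D ^ 2 ∧ |D| ≤ ∏ i, ‖v i‖ := by
  classical
  set E' := Submodule.span ℝ (Set.range v) with hE'
  haveI : FiniteDimensional ℝ E' := FiniteDimensional.span_of_finite ℝ (Set.finite_range v)
  let v' : Fin k → E' := fun i => ⟨v i, Submodule.subset_span (Set.mem_range_self i)⟩
  have hrank : Module.finrank ℝ E' = k := by
    rw [hE', finrank_span_eq_card hv, Fintype.card_fin]
  haveI : Fact (Module.finrank ℝ E' = k) := ⟨hrank⟩
  let b : OrthonormalBasis (Fin k) ℝ E' :=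
    (stdOrthonormalBasis ℝ E').reindex (finCongr hrank)
  let P := b.toBasis.toMatrix v'
  have hinner : ∀ i j, ⟪v i, v j⟫ = ⟪v' i, v' j⟫ := fun i j => rfl
  have hP : (Matrix.of fun i j => ⟪v i, v j⟫) = Pᵀ * P := by
    ext i j
    rw [Matrix.mul_apply]
    simp only [Matrix.of_apply, Matrix.transpose_apply, hinner]
    rw [← b.repr.inner_map_map (v' i) (v' j)]
    rw [PiLp.inner_apply]
    refine Finset.sum_congr rfl fun l _ => ?_
    simp [P, Module.Basis.toMatrix_apply, OrthonormalBasis.coe_toBasis_repr_apply,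
      RCLike.inner_apply, mul_comm]
  have hdet : (Matrix.of fun i j => ⟪v i, v j⟫).det = (b.toBasis.det v') ^ 2 := by
    rw [hP, Matrix.det_mul, Matrix.det_transpose, Module.Basis.det_apply, sq]
  have hvol : |b.toBasis.det v'| ≤ ∏ i, ‖v' i‖ := by
    have := (b.toBasis.orientation).abs_volumeForm_apply_le v'
    rwa [Orientation.volumeForm_robust _ b rfl] at this
  exact ⟨b.toBasis.det v', hdet, hvol⟩

/-- Matrix form of Hadamard's inequality for `AᵀA`, with nonnegativity. -/
lemma aux_gram_bounds {m k : ℕ} (A : Matrix (Fin m) (Fin k) ℝ)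
    (hA : LinearIndependent ℝ (fun j => Aᵀ j)) :
    0 ≤ (Aᵀ * A).det ∧ (Aᵀ * A).det ≤ ∏ j, (∑ i, A i j ^ 2) := by
  classical
  let v : Fin k → EuclideanSpace ℝ (Fin m) := fun j => WithLp.toLp 2 (fun i => A i j)
  have hv : LinearIndependent ℝ v :=
    hA.map' (WithLp.linearEquiv 2 ℝ (Fin m → ℝ)).symm.toLinearMap (LinearEquiv.ker _)
  have hGram : (Matrix.of fun i j => ⟪v i, v j⟫) = Aᵀ * A := by
    ext i j
    rw [Matrix.mul_apply, Matrix.of_apply, PiLp.inner_apply]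
    refine Finset.sum_congr rfl fun l _ => ?_
    simp [v, RCLike.inner_apply, mul_comm]
  have hnorm : ∀ j, ‖v j‖ ^ 2 = ∑ i, A i j ^ 2 := by
    intro j
    rw [EuclideanSpace.norm_eq, Real.sq_sqrt (by positivity)]
    refine Finset.sum_congr rfl fun i _ => ?_
    rw [Real.norm_eq_abs, sq_abs]
  obtain ⟨D, hD2, hDle⟩ := aux_gram_sq v hv
  rw [hGram] at hD2
  constructor
  · rw [hD2]; positivity
  · calc (Aᵀ * A).det = |D| ^ 2 := by rw [hD2, sq_abs]
      _ ≤ (∏ i, ‖v i‖) ^ 2 := by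
          apply pow_le_pow_left₀ (abs_nonneg _) hDle
      _ = ∏ j, (∑ i, A i j ^ 2) := by
          rw [← Finset.prod_pow]
          exact Finset.prod_congr rfl fun j _ => hnorm j

/-- Linearly independent columns give nonzero Gram determinant. -/
lemma aux_det_gram_ne_zero {F : Type*} [Field F] [LinearOrder F] [IsStrictOrderedRing F] {m k : ℕ}
    (A : Matrix (Fin m) (Fin k) F) (hA : LinearIndependent F (fun j => Aᵀ j)) :
    (Aᵀ * A).det ≠ 0 := by
  intro h
  obtain ⟨v, hv, hAv⟩ := Matrix.exists_mulVec_eq_zero_iff.mpr h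
  have h1 : A.mulVec v ⬝ᵥ A.mulVec v = 0 := by
    have := congrArg (fun w => dotProduct v w) hAv
    simpa [← Matrix.mulVec_mulVec, Matrix.dotProduct_mulVec, Matrix.vecMul_transpose] using this
  have h2 : A.mulVec v = 0 := dotProduct_self_eq_zero.mp h1
  rw [Fintype.linearIndependent_iff] at hA
  refine hv (funext fun i => hA v ?_ i)
  funext j
  have := congrFun h2 j
  rw [Matrix.mulVec, dotProduct, Pi.zero_apply] at this
  simp only [Finset.sum_apply, Pi.smul_apply, Pi.zero_apply, smul_eq_mul,
    Matrix.transpose_apply]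
  rw [← this]
  exact Finset.sum_congr rfl fun i _ => mul_comm _ _

/-- Nonzero Gram determinant gives linearly independent columns. -/
lemma aux_li_of_gram {F : Type*} [Field F] [LinearOrder F] [IsStrictOrderedRing F] {m k : ℕ}
    (A : Matrix (Fin m) (Fin k) F) (h : (Aᵀ * A).det ≠ 0) :
    LinearIndependent F (fun j => Aᵀ j) := by
  rw [Fintype.linearIndependent_iff]
  intro v hv
  by_contra hne
  push_neg at hne
  obtain ⟨j0, hj0⟩ := hne
  have hAv : A.mulVec v = 0 := by
    funext j
    have := congrFun hv j
    simp only [Finset.sum_apply, Pi.smul_apply, Pi.zero_apply, smul_eq_mul,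
      Matrix.transpose_apply] at this
    rw [Matrix.mulVec, dotProduct, Pi.zero_apply, ← this]
    exact Finset.sum_congr rfl fun i _ => mul_comm _ _
  exact h (Matrix.exists_mulVec_eq_zero_iff.mp
    ⟨v, fun h0 => hj0 (congrFun h0 j0), by rw [← Matrix.mulVec_mulVec, hAv, Matrix.mulVec_zero]⟩)

/-- If `A` has linearly independent columns, `A.mulVec` is injective at `0`. -/
lemma aux_mulVec_eq_zero {F : Type*} [Field F] {m k : ℕ} {A : Matrix (Fin m) (Fin k) F}
    (hA : LinearIndependent F (fun j => Aᵀ j)) {v : Fin k → F} (h : A.mulVec v = 0) : v = 0 := by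
  rw [Fintype.linearIndependent_iff] at hA
  refine funext fun i => hA v ?_ i
  funext j
  have := congrFun h j
  rw [Matrix.mulVec, dotProduct, Pi.zero_apply] at this
  simp only [Finset.sum_apply, Pi.smul_apply, Pi.zero_apply, smul_eq_mul,
    Matrix.transpose_apply]
  rw [← this]
  exact Finset.sum_congr rfl fun i _ => mul_comm _ _

/-- The coordinatewise cast `ℤ^m → ℚ^m` as a `ℤ`-linear map. -/
noncomputable def auxCast (m : ℕ) : (Fin m → ℤ) →ₗ[ℤ] (Fin m → ℚ) :=
  LinearMap.pi fun i => (Int.castAddHom ℚ).toIntLinearMap.comp (LinearMap.proj i)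

lemma auxCast_apply {m : ℕ} (x : Fin m → ℤ) (i : Fin m) : auxCast m x i = (x i : ℚ) := rfl

lemma auxCast_injective (m : ℕ) : Function.Injective (auxCast m) := by
  intro x y hxy
  funext i
  have := congrFun hxy i
  rw [auxCast_apply, auxCast_apply] at this
  exact_mod_cast this

/-- `ℚ`-span of the cast of a `ℤ`-span. -/
lemma aux_span_cast (m : ℕ) (s : Set (Fin m → ℤ)) :
    Submodule.span ℚ (auxCast m '' ((Submodule.span ℤ s : Submodule ℤ (Fin m → ℤ)) : Set (Fin m → ℤ)))
      = Submodule.span ℚ (auxCast m '' s) := by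
  have h1 : auxCast m '' ((Submodule.span ℤ s : Submodule ℤ (Fin m → ℤ)) : Set (Fin m → ℤ))
      = ((Submodule.span ℤ (auxCast m '' s) : Submodule ℤ (Fin m → ℚ)) : Set (Fin m → ℚ)) := by
    rw [← Submodule.map_coe, Submodule.map_span]
  rw [h1, Submodule.span_span_of_tower]

/-- Casting preserves linear independence, upgrading scalars from `ℤ` to `ℚ`. -/
lemma aux_li_cast {m k : ℕ} {v : Fin k → (Fin m → ℤ)} (hv : LinearIndependent ℤ v) :
    LinearIndependent ℚ (fun i => auxCast m (v i)) := by
  have h1 : LinearIndependent ℤ (fun i => auxCast m (v i)) :=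
    hv.map' (auxCast m) (LinearMap.ker_eq_bot.mpr (auxCast_injective m))
  exact (LinearIndependent.iff_fractionRing ℤ ℚ).mp h1

/-- Cardinality bound for the torsion of the cokernel, from a Smith normal form. -/
lemma aux_torsion_card_le {m k : ℕ} (L : Submodule ℤ (Fin m → ℤ))
    (snf : Module.Basis.SmithNormalForm L (Fin m) k) :
    Finite (Submodule.torsion ℤ ((Fin m → ℤ) ⧸ L)) ∧
    Nat.card (Submodule.torsion ℤ ((Fin m → ℤ) ⧸ L)) ≤ ∏ i, (snf.a i).natAbs := by
  classical
  have ha : ∀ i, snf.a i ≠ 0 := by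
    intro i hai
    have := snf.snf i
    rw [hai, zero_smul] at this
    exact snf.bN.ne_zero i (Subtype.coe_injective (by simpa using this))
  haveI : ∀ i : Fin k, NeZero ((snf.a i).natAbs) :=
    fun i => ⟨fun h => ha i (Int.natAbs_eq_zero.mp h)⟩
  let ψ : (Fin m → ℤ) →ₗ[ℤ] ∀ i : Fin k, ZMod (snf.a i).natAbs :=
    LinearMap.pi fun i =>
      (Int.castAddHom (ZMod (snf.a i).natAbs)).toIntLinearMap ∘ₗ (snf.bM.coord (snf.f i))
  have hψ_apply : ∀ x i, ψ x i = ((snf.bM.repr x (snf.f i) : ℤ) : ZMod (snf.a i).natAbs) :=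
    fun x i => rfl
  have hdvd : ∀ (x : Fin m → ℤ) (hx : x ∈ L) (i : Fin k),
      snf.bM.repr x (snf.f i) = snf.a i * snf.bN.repr ⟨x, hx⟩ i := by
    intro x hx i
    have := snf.repr_apply_embedding_eq_repr_smul (m := (⟨x, hx⟩ : L)) (i := i)
    rw [this, _root_.map_smul]
    rfl
  have hLker : L ≤ LinearMap.ker ψ := by
    intro x hx
    rw [LinearMap.mem_ker]
    funext i
    rw [hψ_apply, hdvd x hx i, Pi.zero_apply, ZMod.intCast_zmod_eq_zero_iff_dvd]
    exact Int.natAbs_dvd.mpr (dvd_mul_right _ _)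
  have key : ∀ x : Fin m → ℤ, (∃ c : ℤ, c ≠ 0 ∧ c • x ∈ L) → ψ x = 0 → x ∈ L := by
    intro x ⟨c, hc, hcx⟩ hψx
    have hout : ∀ j, j ∉ Set.range snf.f → snf.bM.repr x j = 0 := by
      intro j hj
      have h0 : snf.bM.repr (c • x) j = 0 :=
        snf.repr_eq_zero_of_notMem_range (⟨c • x, hcx⟩ : L) hj
      rw [_root_.map_smul] at h0
      exact (mul_eq_zero.mp h0).resolve_left hc
    have hdvd' : ∀ i : Fin k, snf.a i ∣ snf.bM.repr x (snf.f i) := by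
      intro i
      have := congrFun hψx i
      rw [hψ_apply] at this
      exact Int.natAbs_dvd.mp ((ZMod.intCast_zmod_eq_zero_iff_dvd _ _).mp this)
    choose d hd using hdvd'
    have hxmem : x = ∑ i : Fin k, d i • ((snf.bN i : Fin m → ℤ)) := by
      apply snf.bM.repr.injective
      ext j
      rw [map_sum]
      simp only [Finsupp.coe_finset_sum, Finset.sum_apply]
      have hbn : ∀ i : Fin k, snf.bM.repr (d i • (snf.bN i : Fin m → ℤ)) j
          = if snf.f i = j then snf.a i * d i else 0 := by
        intro i
        rw [_root_.map_smul, snf.snf i, _root_.map_smul, snf.bM.repr_self]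
        simp only [Finsupp.smul_apply, Finsupp.single_apply, smul_eq_mul]
        split <;> ring
      rw [Finset.sum_congr rfl fun i _ => hbn i]
      by_cases hj : j ∈ Set.range snf.f
      · obtain ⟨i₀, rfl⟩ := hj
        rw [Finset.sum_eq_single i₀]
        · rw [if_pos rfl, hd i₀]
        · intro i _ hi
          rw [if_neg (fun h => hi (snf.f.injective h))]
        · intro h; exact absurd (Finset.mem_univ i₀) h
      · rw [hout j hj]
        refine (Finset.sum_eq_zero ?_).symm
        intro i _
        rw [if_neg (fun h => hj ⟨i, h⟩)]
    rw [hxmem]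
    exact Submodule.sum_mem _ fun i _ => Submodule.smul_mem _ _ (SetLike.coe_mem _)
  let φ := Submodule.liftQ L ψ hLker
  set T := Submodule.torsion ℤ ((Fin m → ℤ) ⧸ L)
  have hinj : Function.Injective (fun z : T => φ z.val) := by
    intro z w hzw
    have hker : ∀ u : (Fin m → ℤ) ⧸ L, u ∈ T → φ u = 0 → u = 0 := by
      intro u hu hφu
      obtain ⟨x, rfl⟩ := Submodule.Quotient.mk_surjective L u
      obtain ⟨c, hcu⟩ := hu
      have hcx : (c : ℤ) • x ∈ L := by
        rwa [← Submodule.Quotient.mk_eq_zero, Submodule.Quotient.mk_smul]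
      have hx : x ∈ L := key x ⟨c, nonZeroDivisors.coe_ne_zero c, hcx⟩ hφu
      rwa [Submodule.Quotient.mk_eq_zero]
    have h0 : φ ((z : (Fin m → ℤ) ⧸ L) - w) = 0 := by
      rw [map_sub, sub_eq_zero]; exact hzw
    have hmem : ((z : (Fin m → ℤ) ⧸ L) - w) ∈ T := T.sub_mem z.2 w.2
    exact Subtype.ext (sub_eq_zero.mp (hker _ hmem h0))
  constructor
  · exact Finite.of_injective _ hinj
  · calc Nat.card T ≤ Nat.card (∀ i : Fin k, ZMod (snf.a i).natAbs) :=
        Nat.card_le_card_of_injective _ hinj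
      _ = ∏ i, (snf.a i).natAbs := by
        rw [Nat.card_pi]
        exact Finset.prod_congr rfl fun i _ => Nat.card_zmod _

end Aux

/-- If every column of an integer matrix `M` has Euclidean norm at most
`t ≥ 1`, then the torsion subgroup of the cokernel `ℤ^m / M(ℤ^n)` is finite of cardinality
at most `t ^ r`, where `r` is the rank of `M` over `ℚ`. -/
theorem stmt_0 (m n : ℕ) (M : Matrix (Fin m) (Fin n) ℤ) (t : ℝ) (ht : 1 ≤ t)
    (hcol : ∀ j : Fin n, Real.sqrt (∑ i : Fin m, ((M i j : ℝ)) ^ 2) ≤ t) :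
    Finite (Submodule.torsion ℤ ((Fin m → ℤ) ⧸ LinearMap.range (Matrix.mulVecLin M))) ∧
    (Nat.card (Submodule.torsion ℤ ((Fin m → ℤ) ⧸ LinearMap.range (Matrix.mulVecLin M))) : ℝ)
      ≤ t ^ (M.map (Int.cast : ℤ → ℚ)).rank := by
  classical
  set L := LinearMap.range (Matrix.mulVecLin M) with hLdef
  obtain ⟨k, snf⟩ := Submodule.smithNormalForm (Pi.basisFun ℤ (Fin m)) L
  obtain ⟨hfin, hcard⟩ := aux_torsion_card_le L snf
  refine ⟨hfin, ?_⟩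
  have ht0 : (0:ℝ) ≤ t := le_trans zero_le_one ht
  -- the `a i` are nonzero
  have ha : ∀ i, snf.a i ≠ 0 := by
    intro i hai
    have := snf.snf i
    rw [hai, zero_smul] at this
    exact snf.bN.ne_zero i (Subtype.coe_injective (by simpa using this))
  -- the ℚ-columns of M
  set cols : Fin n → (Fin m → ℚ) := fun j => auxCast m (fun i => M i j) with hcols
  have hbNli : LinearIndependent ℤ (fun i => ((snf.bN i : Fin m → ℤ))) :=
    snf.bN.linearIndependent.map' L.subtype (Submodule.ker_subtype L)
  have hw : LinearIndependent ℚ (fun i => auxCast m ((snf.bN i : Fin m → ℤ))) :=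
    aux_li_cast hbNli
  -- L as two ℤ-spans
  have hL1 : L = Submodule.span ℤ (Set.range fun j : Fin n => (fun i => M i j)) := by
    rw [hLdef, Matrix.range_mulVecLin]
    rfl
  have hL2 : L = Submodule.span ℤ (Set.range fun i => ((snf.bN i : Fin m → ℤ))) := by
    conv_lhs => rw [← Submodule.map_subtype_top L, ← snf.bN.span_eq]
    rw [Submodule.map_span, ← Set.range_comp]
    rfl
  -- the two ℚ-spans agree
  have hspan : Submodule.span ℚ (Set.range cols)
      = Submodule.span ℚ (Set.range fun i => auxCast m ((snf.bN i : Fin m → ℤ))) := by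
    have e1 : Set.range cols = auxCast m '' Set.range (fun j : Fin n => (fun i => M i j)) := by
      rw [← Set.range_comp]; rfl
    have e2 : Set.range (fun i => auxCast m ((snf.bN i : Fin m → ℤ)))
        = auxCast m '' Set.range (fun i => ((snf.bN i : Fin m → ℤ))) := by
      rw [← Set.range_comp]; rfl
    rw [e1, e2, ← aux_span_cast m (Set.range fun j : Fin n => (fun i => M i j)),
      ← aux_span_cast m (Set.range fun i => ((snf.bN i : Fin m → ℤ))), ← hL1, ← hL2]
  -- the rank equals k
  have hrank : (M.map (Int.cast : ℤ → ℚ)).rank = k := by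
    have h0 : (M.map (Int.cast : ℤ → ℚ)).rank
        = Module.finrank ℚ (Submodule.span ℚ (Set.range cols)) := by
      rw [Matrix.rank_eq_finrank_span_cols]
      rfl
    rw [h0, hspan, finrank_span_eq_card hw, Fintype.card_fin]
  -- choose k columns of M that are ℚ-linearly independent
  obtain ⟨b, hbsub, hbspan, hbli⟩ := exists_linearIndependent ℚ (Set.range cols)
  have hbfin : b.Finite := (Set.finite_range cols).subset hbsub
  haveI : Fintype b := hbfin.fintype
  have hcardb : Fintype.card b = k := by
    have h1 : Module.finrank ℚ (Submodule.span ℚ b) = b.toFinset.card :=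
      finrank_span_set_eq_card (by exact hbli)
    rw [hbspan, hspan, finrank_span_eq_card hw, Fintype.card_fin] at h1
    rw [← Set.toFinset_card, ← h1]
  let e : Fin k ≃ b := (Fintype.equivFinOfCardEq hcardb).symm
  have hechoice : ∀ i : Fin k, ∃ j : Fin n, cols j = (e i : Fin m → ℚ) :=
    fun i => hbsub (e i).2
  choose σ hσ using hechoice
  have hNli : LinearIndependent ℚ (fun i => cols (σ i)) := by
    have : (fun i => cols (σ i)) = (fun x : b => (x : Fin m → ℚ)) ∘ e := by
      funext i; rw [hσ i]; rfl
    rw [this]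
    exact hbli.comp e e.injective
  -- the matrices
  set N : Matrix (Fin m) (Fin k) ℤ := M.submatrix id σ with hN
  set B : Matrix (Fin m) (Fin k) ℤ := Matrix.of (fun i j => (snf.bN j : Fin m → ℤ) i) with hB
  set U : Matrix (Fin m) (Fin k) ℤ := Matrix.of (fun i j => (snf.bM (snf.f j) : Fin m → ℤ) i)
    with hU
  have hBU : B = U * Matrix.diagonal snf.a := by
    ext i j
    rw [Matrix.mul_diagonal]
    show (snf.bN j : Fin m → ℤ) i = _
    rw [snf.snf j]
    simp [hU, mul_comm]
  -- columns of M lie in L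
  have hcolmem : ∀ p : Fin n, (fun i => M i p) ∈ L := by
    intro p
    refine ⟨Pi.single p 1, ?_⟩
    funext i
    simp [Matrix.mulVecLin_apply, Matrix.mulVec, dotProduct, Pi.single_apply]
  set C : Matrix (Fin k) (Fin k) ℤ :=
    Matrix.of (fun i j => snf.bN.repr ⟨fun l => M l (σ j), hcolmem (σ j)⟩ i) with hC
  have hBC : B * C = N := by
    ext i j
    rw [Matrix.mul_apply]
    have h1 := snf.bN.sum_repr ⟨fun l => M l (σ j), hcolmem (σ j)⟩
    have h2 := congrFun (congrArg (Subtype.val) h1) i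
    rw [AddSubmonoidClass.coe_finset_sum] at h2
    simp only [Finset.sum_apply, Submodule.coe_smul_of_tower, Pi.smul_apply,
      smul_eq_mul] at h2
    calc ∑ l, B i l * C l j
        = ∑ x, (snf.bN.repr ⟨fun l => M l (σ j), hcolmem (σ j)⟩ x)
            * (snf.bN x : Fin m → ℤ) i :=
          Finset.sum_congr rfl fun l _ => by simp [hB, hC, mul_comm]
      _ = M i (σ j) := h2
      _ = N i j := rfl
  -- determinant identities over ℤ
  set Δ : ℤ := ∏ i, snf.a i with hΔ
  set δ : ℤ := C.det with hδdef
  have hgB : (Bᵀ * B).det = Δ ^ 2 * (Uᵀ * U).det := by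
    rw [hBU]
    rw [Matrix.transpose_mul, Matrix.diagonal_transpose]
    have habc : Matrix.diagonal snf.a * Uᵀ * (U * Matrix.diagonal snf.a)
        = Matrix.diagonal snf.a * (Uᵀ * U) * Matrix.diagonal snf.a := by
      simp only [Matrix.mul_assoc]
    rw [habc, Matrix.det_mul, Matrix.det_mul, Matrix.det_diagonal]
    ring
  have hgN : (Nᵀ * N).det = δ ^ 2 * (Bᵀ * B).det := by
    rw [← hBC, Matrix.transpose_mul]
    have habc : Cᵀ * Bᵀ * (B * C) = Cᵀ * (Bᵀ * B) * C := by
      simp only [Matrix.mul_assoc]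
    rw [habc, Matrix.det_mul, Matrix.det_mul, Matrix.det_transpose]
    ring
  -- casting Gram determinants
  have hcastdetQ : ∀ (A : Matrix (Fin m) (Fin k) ℤ),
      (((Aᵀ * A).det : ℤ) : ℚ) = ((A.map (Int.cast : ℤ → ℚ))ᵀ * A.map (Int.cast : ℤ → ℚ)).det := by
    intro A
    have h := RingHom.map_det (Int.castRingHom ℚ) (Aᵀ * A)
    rw [RingHom.mapMatrix_apply, Matrix.map_mul (f := Int.castRingHom ℚ),
      Matrix.transpose_map] at h
    exact h
  have hcastdetR : ∀ (A : Matrix (Fin m) (Fin k) ℤ),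
      (((Aᵀ * A).det : ℤ) : ℝ) = ((A.map (Int.cast : ℤ → ℝ))ᵀ * A.map (Int.cast : ℤ → ℝ)).det := by
    intro A
    have h := RingHom.map_det (Int.castRingHom ℝ) (Aᵀ * A)
    rw [RingHom.mapMatrix_apply, Matrix.map_mul (f := Int.castRingHom ℝ),
      Matrix.transpose_map] at h
    exact h
  -- U has ℚ-linearly independent columns, so its Gram det is a positive integer
  have hUli : LinearIndependent ℚ (fun j => (U.map (Int.cast : ℤ → ℚ))ᵀ j) := by
    have h1 : LinearIndependent ℤ (fun j => (snf.bM (snf.f j) : Fin m → ℤ)) :=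
      snf.bM.linearIndependent.comp snf.f snf.f.injective
    exact aux_li_cast h1
  have hgUq : (((Uᵀ * U).det : ℤ) : ℚ) ≠ 0 := by
    rw [hcastdetQ U]
    exact aux_det_gram_ne_zero _ hUli
  have hgU0 : (Uᵀ * U).det ≠ 0 := fun h => hgUq (by rw [h]; norm_num)
  have hgU_nonneg : 0 ≤ (Uᵀ * U).det := by
    have h1 : (((Uᵀ * U).det : ℤ) : ℝ) ≠ 0 := by exact_mod_cast hgU0
    rw [hcastdetR U] at h1
    have h2 := aux_li_of_gram _ h1
    have h3 := (aux_gram_bounds _ h2).1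
    rw [← hcastdetR U] at h3
    exact_mod_cast h3
  have hgU1 : 1 ≤ (Uᵀ * U).det := lt_of_le_of_ne hgU_nonneg (Ne.symm hgU0)
  -- N has ℚ-linearly independent columns
  have hNliq : LinearIndependent ℚ (fun j => ((N.map (Int.cast : ℤ → ℚ))ᵀ) j) := by
    have : (fun j => ((N.map (Int.cast : ℤ → ℚ))ᵀ) j) = fun i => cols (σ i) := by
      funext i; funext l; rfl
    rw [this]; exact hNli
  -- δ is nonzero
  have hδ0 : δ ≠ 0 := by
    intro h0
    have h0q : (C.map (Int.cast : ℤ → ℚ)).det = 0 := by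
      have h2 : C.det = 0 := hδdef ▸ h0
      have h1 : ((C.det : ℤ) : ℚ) = (C.map (Int.cast : ℤ → ℚ)).det :=
        RingHom.map_det (Int.castRingHom ℚ) C
      rw [← h1, h2, Int.cast_zero]
    obtain ⟨v, hv, hCv⟩ := Matrix.exists_mulVec_eq_zero_iff.mpr h0q
    have hBCq : (B.map (Int.cast : ℤ → ℚ)) * (C.map (Int.cast : ℤ → ℚ))
        = N.map (Int.cast : ℤ → ℚ) := by
      have hmm := Matrix.map_mul (L := B) (M := C) (f := Int.castRingHom ℚ)
      rw [hBC] at hmm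
      exact hmm.symm
    have hNv : (N.map (Int.cast : ℤ → ℚ)).mulVec v = 0 := by
      rw [← hBCq, ← Matrix.mulVec_mulVec, hCv, Matrix.mulVec_zero]
    exact hv (aux_mulVec_eq_zero hNliq hNv)
  have hδ1 : 1 ≤ δ ^ 2 := by
    have h2 : 0 < δ ^ 2 := by positivity
    omega
  -- the integer chain : Δ² ≤ gN
  have hchain : Δ ^ 2 ≤ (Nᵀ * N).det := by
    calc Δ ^ 2 ≤ Δ ^ 2 * (Uᵀ * U).det := le_mul_of_one_le_right (sq_nonneg Δ) hgU1
      _ = (Bᵀ * B).det := hgB.symm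
      _ ≤ δ ^ 2 * (Bᵀ * B).det := by
          refine le_mul_of_one_le_left ?_ hδ1
          rw [hgB]
          positivity
      _ = (Nᵀ * N).det := hgN.symm
  -- Hadamard bound over ℝ
  have hgN0 : ((Nᵀ * N).det : ℝ) ≠ 0 := by
    have hΔ0 : Δ ≠ 0 := Finset.prod_ne_zero_iff.mpr fun i _ => ha i
    have h1 : (0:ℤ) < Δ ^ 2 := by positivity
    have : (0:ℤ) < (Nᵀ * N).det := lt_of_lt_of_le h1 hchain
    exact_mod_cast this.ne'
  have hNliR : LinearIndependent ℝ (fun j => ((N.map (Int.cast : ℤ → ℝ))ᵀ) j) := by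
    apply aux_li_of_gram
    rw [← hcastdetR N]
    exact hgN0
  have hhad := (aux_gram_bounds (N.map (Int.cast : ℤ → ℝ)) hNliR).2
  have hcolbound : ∀ j : Fin k, (∑ i, (N.map (Int.cast : ℤ → ℝ)) i j ^ 2) ≤ t ^ 2 := by
    intro j
    have h1 := hcol (σ j)
    have h2 : (0:ℝ) ≤ ∑ i : Fin m, ((M i (σ j) : ℝ)) ^ 2 := by positivity
    have h3 : (∑ i : Fin m, ((M i (σ j) : ℝ)) ^ 2) ≤ t ^ 2 := by
      have := pow_le_pow_left₀ (Real.sqrt_nonneg _) h1 2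
      rwa [Real.sq_sqrt h2] at this
    convert h3 using 1
    rfl
  have hprodbound : ((Nᵀ * N).det : ℝ) ≤ (t ^ k) ^ 2 := by
    calc ((Nᵀ * N).det : ℝ)
        = ((N.map (Int.cast : ℤ → ℝ))ᵀ * N.map (Int.cast : ℤ → ℝ)).det := hcastdetR N
      _ ≤ ∏ j, (∑ i, (N.map (Int.cast : ℤ → ℝ)) i j ^ 2) := hhad
      _ ≤ ∏ _j : Fin k, t ^ 2 := by
          apply Finset.prod_le_prod
          · intro j _; positivity
          · intro j _; exact hcolbound j
      _ = (t ^ k) ^ 2 := by rw [Finset.prod_const, Finset.card_univ, Fintype.card_fin]; ring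
  -- conclude
  have habsΔ : |(Δ : ℝ)| ≤ t ^ k := by
    have h2 : |(Δ : ℝ)| ^ 2 ≤ (t ^ k) ^ 2 := by
      have he : |(Δ : ℝ)| ^ 2 = ((Δ ^ 2 : ℤ) : ℝ) := by
        rw [sq_abs]; push_cast; ring
      rw [he]
      calc ((Δ ^ 2 : ℤ) : ℝ) ≤ (((Nᵀ * N).det : ℤ) : ℝ) := by exact_mod_cast hchain
        _ ≤ (t ^ k) ^ 2 := hprodbound
    exact (pow_le_pow_iff_left₀ (abs_nonneg _) (by positivity) two_ne_zero).mp h2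
  calc (Nat.card (Submodule.torsion ℤ ((Fin m → ℤ) ⧸ L)) : ℝ)
      ≤ ((∏ i, (snf.a i).natAbs : ℕ) : ℝ) := by exact_mod_cast hcard
    _ = |(Δ : ℝ)| := by
        rw [hΔ]
        push_cast [Nat.cast_natAbs]
        rw [Finset.abs_prod]
    _ ≤ t ^ k := habsΔ
    _ = t ^ (M.map (Int.cast : ℤ → ℚ)).rank := by rw [hrank]
end

section
/- Let X be a finite d-dimensional simplicial complex and let φ be a (d−1)-cocycle over a field R whose support is inclusion-minimal among supports of nonzero (d−1)-cocycles over R. Then the support of φ, viewed as a (d−1)-dimensional complex, is strongly connected: for any two facets σ, τ in supp(φ) there is a sequence σ = σ_1, σ_2, ..., σ_k = τ of facets in supp(φ) with |σ_i ∩ σ_{i+1}| = d−1 for all i. -/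
open Finset

/-- Incidence sign `[s : s.erase v]`: `(-1)` to the number of elements of `s` below `v`. -/
def isign {n : ℕ} (s : Finset (Fin n)) (v : Fin n) : ℤ :=
  (-1) ^ (s.filter (· < v)).card

/-- Simplicial boundary operator on chains, written degree-independently:
`(∂ c) t = ∑_{v ∉ t} ± c (insert v t)`. -/
def bdryFun {R : Type*} [AddCommGroup R] {n : ℕ} (c : Finset (Fin n) → R) :
    Finset (Fin n) → R :=
  fun t => ∑ v ∈ tᶜ, isign (insert v t) v • c (insert v t)

/-- Simplicial coboundary operator on cochains, written degree-independently:
`(δ φ) s = ∑_{v ∈ s} ± φ (s.erase v)`. -/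
def cobdryFun {R : Type*} [AddCommGroup R] {n : ℕ} (φ : Finset (Fin n) → R) :
    Finset (Fin n) → R :=
  fun s => ∑ v ∈ s, isign s v • φ (s.erase v)

/-- An abstract simplicial complex on vertex set `Fin n`: a family of nonempty finsets
closed under passing to nonempty subsets. -/
def IsComplex {n : ℕ} (K : Finset (Finset (Fin n))) : Prop :=
  (∀ s ∈ K, s.Nonempty) ∧ ∀ s ∈ K, ∀ t ⊆ s, t.Nonempty → t ∈ K

/-- The complex `K` has dimension at most `d` (all faces have at most `d + 1` vertices). -/
def DimAtMost {n : ℕ} (K : Finset (Finset (Fin n))) (d : ℕ) : Prop :=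
  ∀ s ∈ K, s.card ≤ d + 1

/-- `H_j(K; R) = 0`: every simplicial `j`-cycle of `K` with coefficients in `R` is the
boundary of a `(j+1)`-chain of `K`.  (`j`-chains are supported on faces with `j + 1`
vertices.) -/
def HomologyVanishes (R : Type*) [AddCommGroup R] {n : ℕ} (K : Finset (Finset (Fin n)))
    (j : ℕ) : Prop :=
  ∀ c : Finset (Fin n) → R, (∀ s, c s ≠ 0 → s ∈ K ∧ s.card = j + 1) →
    (∀ t : Finset (Fin n), t.Nonempty → bdryFun c t = 0) →
    ∃ b : Finset (Fin n) → R, (∀ s, b s ≠ 0 → s ∈ K ∧ s.card = j + 2) ∧ bdryFun b = c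

/-- `φ` is a simplicial cocycle of `K` in "card-degree" `d` (i.e. a `(d-1)`-cocycle):
it is supported on `d`-element faces of `K`, and its coboundary vanishes on every
`(d+1)`-element face of `K`. -/
def IsCocycleOn (R : Type*) [AddCommGroup R] {n : ℕ} (K : Finset (Finset (Fin n))) (d : ℕ)
    (φ : Finset (Fin n) → R) : Prop :=
  (∀ s, φ s ≠ 0 → s ∈ K ∧ s.card = d) ∧
  ∀ τ ∈ K, τ.card = d + 1 → cobdryFun φ τ = 0

/-- `φ` is nonzero and has inclusion-minimal support among nonzero cocycles of `K`. -/
def HasMinimalSupport (R : Type*) [AddCommGroup R] {n : ℕ} (K : Finset (Finset (Fin n)))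
    (d : ℕ) (φ : Finset (Fin n) → R) : Prop :=
  φ ≠ 0 ∧ ∀ ψ : Finset (Fin n) → R, IsCocycleOn R K d ψ → ψ ≠ 0 →
    Function.support ψ ⊆ Function.support φ → Function.support ψ = Function.support φ

/-- The support of an inclusion-minimal nonzero `(d-1)`-cocycle over a
field is strongly connected: any two facets in the support are joined by a chain of facets
in the support, consecutive ones meeting in `d - 1` vertices. -/
theorem stmt_6 (R : Type*) [Field R] (n d : ℕ) (hd : 1 ≤ d)
    (K : Finset (Finset (Fin n))) (hK : IsComplex K) (hdim : DimAtMost K d)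
    (φ : Finset (Fin n) → R) (hφ : IsCocycleOn R K d φ)
    (hmin : HasMinimalSupport R K d φ) :
    ∀ σ, φ σ ≠ 0 → ∀ τ, φ τ ≠ 0 →
      Relation.ReflTransGen
        (fun a b => φ a ≠ 0 ∧ φ b ≠ 0 ∧ (a ∩ b).card = d - 1) σ τ := by
  classical
  intro σ hσ τ hτ
  set r : Finset (Fin n) → Finset (Fin n) → Prop :=
    fun a b => φ a ≠ 0 ∧ φ b ≠ 0 ∧ (a ∩ b).card = d - 1 with hr
  set ψ : Finset (Fin n) → R := fun s => if Relation.ReflTransGen r σ s then φ s else 0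
    with hψ
  have hsub : Function.support ψ ⊆ Function.support φ := by
    intro s hs
    simp only [Function.mem_support, hψ] at hs ⊢
    intro h; apply hs; simp [h]
  have hcoc : IsCocycleOn R K d ψ := by
    constructor
    · intro s hs
      exact hφ.1 s (hsub hs)
    · intro t ht hcard
      by_cases hex : ∃ v ∈ t, φ (t.erase v) ≠ 0 ∧ Relation.ReflTransGen r σ (t.erase v)
      · obtain ⟨v, hv, hfv, hconn⟩ := hex
        have heq : cobdryFun ψ t = cobdryFun φ t := by
          unfold cobdryFun
          refine Finset.sum_congr rfl ?_
          intro u hu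
          by_cases h0 : φ (t.erase u) = 0
          · simp [hψ, h0]
          · have hconn' : Relation.ReflTransGen r σ (t.erase u) := by
              rcases eq_or_ne u v with rfl | hne
              · exact hconn
              · refine hconn.tail ?_
                refine ⟨hfv, h0, ?_⟩
                have hinter : t.erase v ∩ t.erase u = (t.erase v).erase u := by
                  ext x
                  simp only [Finset.mem_inter, Finset.mem_erase]
                  tauto
                have humem : u ∈ t.erase v := Finset.mem_erase.2 ⟨hne, hu⟩
                rw [hinter, Finset.card_erase_of_mem humem,
                  Finset.card_erase_of_mem hv, hcard]
                omega
            simp [hψ, hconn']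
        rw [heq]; exact hφ.2 t ht hcard
      · push_neg at hex
        unfold cobdryFun
        apply Finset.sum_eq_zero
        intro u hu
        by_cases h0 : φ (t.erase u) = 0
        · simp [hψ, h0]
        · have := hex u hu h0
          simp [hψ, this]
  have hne : ψ ≠ 0 := by
    intro h
    have h0 : ψ σ = 0 := by rw [h]; rfl
    rw [hψ] at h0
    simp only [Relation.ReflTransGen.refl, if_true] at h0
    exact hσ h0
  have hss := hmin.2 ψ hcoc hne hsub
  have hτψ : ψ τ ≠ 0 := by
    have : τ ∈ Function.support ψ := hss ▸ hτ
    exact this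
  rw [hψ] at hτψ
  by_cases h : Relation.ReflTransGen r σ τ
  · exact h
  · simp [h] at hτψ
end

section
/- Fix d ≥ 2 and c > (d+1)/2. Then the sum over k from 2 to ⌊log n⌋ of (2d)^k · n^{d−1+k} · (1 − c·log n/n)^{k(n − d·log n)} tends to 0 as n → ∞. -/
open Filter Real

set_option maxHeartbeats 1000000 in
private lemma stmt12_aux (d : ℕ) (c : ℝ) (hd : 2 ≤ d) (hc1 : (1:ℝ) < c) :
    ∀ᶠ n : ℕ in atTop,
      (3:ℝ) ≤ n ∧ c * Real.log n / n ≤ 1/2 ∧ (d:ℝ) * Real.log n ≤ n ∧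
        c * d * (Real.log n)^3 / n ≤ 1 ∧ (2*d : ℝ) * (n:ℝ) ^ ((1:ℝ) - c) ≤ 1 := by
  have hx : Tendsto (fun n : ℕ => (n:ℝ)) atTop atTop := tendsto_natCast_atTop_atTop
  -- log n / n → 0 and (log n)^3 / n → 0
  have h1 : Tendsto (fun x : ℝ => Real.log x ^ (1:ℕ) / (1 * x + 0)) atTop (nhds 0) :=
    Real.tendsto_pow_log_div_mul_add_atTop 1 0 1 one_ne_zero
  have h3 : Tendsto (fun x : ℝ => Real.log x ^ (3:ℕ) / (1 * x + 0)) atTop (nhds 0) :=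
    Real.tendsto_pow_log_div_mul_add_atTop 1 0 3 one_ne_zero
  have h5 : Tendsto (fun x : ℝ => x ^ ((1:ℝ) - c)) atTop (nhds 0) := by
    have := tendsto_rpow_neg_atTop (y := c - 1) (by linarith : 0 < c - 1)
    simpa [neg_sub] using this
  have h1' : Tendsto (fun n : ℕ => c * (Real.log n / n)) atTop (nhds (c * 0)) :=
    by apply Tendsto.const_mul; simpa [Function.comp_def] using h1.comp hx
  have h3' : Tendsto (fun n : ℕ => c * d * ((Real.log n)^3 / n)) atTop (nhds (c * d * 0)) :=
    by apply Tendsto.const_mul; simpa [Function.comp_def] using h3.comp hx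
  have h5' : Tendsto (fun n : ℕ => (2*d : ℝ) * (n:ℝ) ^ ((1:ℝ) - c)) atTop (nhds ((2*d:ℝ) * 0)) :=
    by apply Tendsto.const_mul; exact h5.comp hx
  rw [mul_zero] at h1' h3' h5'
  filter_upwards [eventually_ge_atTop 3,
    h1'.eventually (eventually_le_nhds (by norm_num : (0:ℝ) < 1/2)),
    (h1'.eventually (eventually_le_nhds (by positivity : (0:ℝ) < (d:ℝ)⁻¹ * c))),
    h3'.eventually (eventually_le_nhds one_pos),
    h5'.eventually (eventually_le_nhds one_pos)] with n hn3 e1 e2 e3 e5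
  have hn3' : (3:ℝ) ≤ n := by exact_mod_cast hn3
  have hn0 : (0:ℝ) < n := by linarith
  refine ⟨hn3', ?_, ?_, ?_, e5⟩
  · calc c * Real.log n / n = c * (Real.log n / n) := by ring
      _ ≤ 1/2 := e1
  · -- d * log n ≤ n
    have hd0 : (0:ℝ) < d := by positivity
    have : c * (Real.log n / n) ≤ (d:ℝ)⁻¹ * c := e2
    have hlog : Real.log n ≤ (d:ℝ)⁻¹ * n := by
      have hc0 : (0:ℝ) < c := by linarith
      have e2' : c * Real.log n / n ≤ (d:ℝ)⁻¹ * c := by rw [mul_div_assoc]; exact e2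
      rw [div_le_iff₀ hn0] at e2'
      nlinarith
    calc (d:ℝ) * Real.log n ≤ (d:ℝ) * ((d:ℝ)⁻¹ * n) := by
          exact mul_le_mul_of_nonneg_left hlog hd0.le
      _ = n := by field_simp
  · calc c * d * (Real.log n)^3 / n = c * (d:ℝ) * (Real.log n ^ 3 / n) := by ring
      _ ≤ 1 := e3

/-- For `d ≥ 2` and `c > (d+1)/2`,
`∑_{k=2}^{⌊log n⌋} (2d)^k n^(d-1+k) (1 - c log n / n)^(k (n - d log n)) → 0` as `n → ∞`. -/
theorem stmt_12 (d : ℕ) (hd : 2 ≤ d) (c : ℝ) (hc : ((d : ℝ) + 1) / 2 < c) :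
    Filter.Tendsto
      (fun n : ℕ => ∑ k ∈ Finset.Icc 2 ⌊Real.log n⌋₊,
        ((2 * d : ℕ) : ℝ) ^ k * (n : ℝ) ^ (d - 1 + k) *
          (1 - c * Real.log n / n) ^ ((k : ℝ) * ((n : ℝ) - d * Real.log n)))
      Filter.atTop (nhds 0) := by
  have hd2 : (2:ℝ) ≤ (d:ℝ) := by exact_mod_cast hd
  have hc1 : (1:ℝ) < c := by linarith
  -- the squeezing function
  set g : ℕ → ℝ := fun n => Real.exp 1 * (4 * d^2) *
      (Real.log n / (n:ℝ) ^ (2*c - ((d:ℝ)+1))) with hg_def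
  have hb : (0:ℝ) < 2*c - ((d:ℝ)+1) := by linarith
  have hgt : Tendsto g atTop (nhds 0) := by
    have := ((isLittleO_log_rpow_atTop hb).tendsto_div_nhds_zero.comp
      tendsto_natCast_atTop_atTop).const_mul (Real.exp 1 * (4 * d^2))
    rw [mul_zero] at this
    exact this
  refine squeeze_zero' ?_ ?_ hgt
  · -- nonnegativity, eventually
    filter_upwards [stmt12_aux d c hd hc1] with n ⟨hn3, hhalf, _, _, _⟩
    apply Finset.sum_nonneg
    intro k hk
    have hbase : (0:ℝ) ≤ 1 - c * Real.log n / n := by linarith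
    positivity
  · -- the main bound
    filter_upwards [stmt12_aux d c hd hc1] with n ⟨hn3, hhalf, hdlog, hcube, h2d⟩
    have hn0 : (0:ℝ) < n := by linarith
    have hn1 : (1:ℝ) ≤ n := by linarith
    have hlog1 : (1:ℝ) ≤ Real.log n := by
      rw [show (1:ℝ) = Real.log (Real.exp 1) from (Real.log_exp 1).symm]
      exact Real.log_le_log (Real.exp_pos 1) (by linarith [Real.exp_one_lt_d9])
    have hlog0 : (0:ℝ) ≤ Real.log n := by linarith
    -- bound each term by B
    set B : ℝ := Real.exp 1 * (4 * d^2) * (n:ℝ) ^ ((d:ℝ) + 1 - 2*c) with hB_def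
    have hB0 : 0 ≤ B := by positivity
    have hterm : ∀ k ∈ Finset.Icc 2 ⌊Real.log n⌋₊,
        ((2 * d : ℕ) : ℝ) ^ k * (n : ℝ) ^ (d - 1 + k) *
          (1 - c * Real.log n / n) ^ ((k : ℝ) * ((n : ℝ) - d * Real.log n)) ≤ B := by
      intro k hk
      obtain ⟨hk2, hkf⟩ := Finset.mem_Icc.mp hk
      have hklog : (k:ℝ) ≤ Real.log n := le_trans (Nat.cast_le.mpr hkf) (Nat.floor_le hlog0)
      have hk2' : (2:ℝ) ≤ (k:ℝ) := by exact_mod_cast hk2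
      set x : ℝ := c * Real.log n / n with hx_def
      have hx0 : 0 < x := by positivity
      have hbase : (0:ℝ) < 1 - x := by linarith
      set E : ℝ := (k : ℝ) * ((n : ℝ) - d * Real.log n) with hE_def
      have hE0 : 0 ≤ E := mul_nonneg (by positivity) (by linarith)
      -- step 1 : (1-x)^E ≤ exp (1 - c k log n)
      have step1 : (1 - x) ^ E ≤ Real.exp (1 - c * k * Real.log n) := by
        rw [Real.rpow_def_of_pos hbase]
        apply Real.exp_le_exp.mpr
        have hlx : Real.log (1 - x) ≤ -x := by
          have := Real.log_le_sub_one_of_pos hbase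
          linarith
        have h1 : Real.log (1 - x) * E ≤ -x * E :=
          mul_le_mul_of_nonneg_right hlx hE0
        have h2 : -x * E ≤ 1 - c * k * Real.log n := by
          have hEx : x * E = c * k * Real.log n - c * d * k * (Real.log n)^2 / n := by
            rw [hx_def, hE_def]; field_simp
          have hsmall : c * d * k * (Real.log n)^2 / n ≤ 1 := by
            have : c * d * k * (Real.log n)^2 ≤ c * d * (Real.log n)^3 := by
              nlinarith [mul_pos (mul_pos (by linarith : (0:ℝ) < c) (by linarith : (0:ℝ) < (d:ℝ))) (sq_nonneg (Real.log n) |>.lt_of_ne' (by nlinarith))]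
            calc c * d * k * (Real.log n)^2 / n ≤ c * d * (Real.log n)^3 / n := by
                  exact div_le_div_of_nonneg_right this hn0.le
              _ ≤ 1 := hcube
          linarith [hEx, hsmall]
        have hcomm : Real.log (1 - x) * E = E * Real.log (1 - x) := mul_comm _ _
        linarith
      -- step 2 : rewrite exp(1 - ck log n) = e * n^(-(c*k))
      have step2 : Real.exp (1 - c * k * Real.log n) =
          Real.exp 1 * (n:ℝ) ^ (-(c * k)) := by
        rw [Real.rpow_def_of_pos hn0, ← Real.exp_add]
        ring_nf
      -- combine powers: n^(d-1+k) = n^((d-1+k : ℝ))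
      have hpow : ((n:ℝ)) ^ (d - 1 + k) = (n:ℝ) ^ (((d:ℝ) - 1 + k)) := by
        rw [← Real.rpow_natCast]
        congr 1
        have : (1:ℕ) ≤ d := by omega
        push_cast [Nat.cast_sub this]
        ring
      have hmerge : (n:ℝ) ^ ((d:ℝ) - 1 + k) * (n:ℝ) ^ (-(c * k))
          = (n:ℝ) ^ ((d:ℝ) - 1) * ((n:ℝ) ^ ((1:ℝ) - c)) ^ k := by
        rw [← Real.rpow_natCast ((n:ℝ) ^ ((1:ℝ) - c)) k, ← Real.rpow_mul hn0.le,
          ← Real.rpow_add hn0, ← Real.rpow_add hn0]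
        congr 1
        ring
      have key : ((2 * d : ℕ) : ℝ) ^ k * (n : ℝ) ^ (d - 1 + k) * (Real.exp 1 * (n:ℝ) ^ (-(c * k)))
          = Real.exp 1 * ((n:ℝ) ^ ((d:ℝ) - 1) * ((2*(d:ℝ)) * (n:ℝ) ^ ((1:ℝ) - c)) ^ k) := by
        have hcast : ((2 * d : ℕ) : ℝ) = 2 * (d:ℝ) := by push_cast; ring
        rw [hcast, hpow, mul_pow]
        linear_combination ((2*(d:ℝ)) ^ k * Real.exp 1) * hmerge
      have h2d0 : (0:ℝ) ≤ (2*(d:ℝ)) * (n:ℝ) ^ ((1:ℝ) - c) := by positivity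
      have hpowk : ((2*(d:ℝ)) * (n:ℝ) ^ ((1:ℝ) - c)) ^ k ≤
          ((2*(d:ℝ)) * (n:ℝ) ^ ((1:ℝ) - c)) ^ 2 :=
        pow_le_pow_of_le_one h2d0 h2d hk2
      have hsq : ((2*(d:ℝ)) * (n:ℝ) ^ ((1:ℝ) - c)) ^ 2 = 4 * d^2 * (n:ℝ) ^ ((2:ℝ) - 2*c) := by
        rw [mul_pow, ← Real.rpow_natCast ((n:ℝ) ^ ((1:ℝ) - c)) 2, ← Real.rpow_mul hn0.le]
        push_cast; ring_nf
      calc ((2 * d : ℕ) : ℝ) ^ k * (n : ℝ) ^ (d - 1 + k) *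
            (1 - c * Real.log n / n) ^ ((k : ℝ) * ((n : ℝ) - d * Real.log n))
          ≤ ((2 * d : ℕ) : ℝ) ^ k * (n : ℝ) ^ (d - 1 + k) * (Real.exp 1 * (n:ℝ) ^ (-(c * k))) := by
            rw [step2] at step1
            exact mul_le_mul_of_nonneg_left step1 (by positivity)
        _ = Real.exp 1 * ((n:ℝ) ^ ((d:ℝ) - 1) * ((2*(d:ℝ)) * (n:ℝ) ^ ((1:ℝ) - c)) ^ k) := key
        _ ≤ Real.exp 1 * ((n:ℝ) ^ ((d:ℝ) - 1) * (4 * d^2 * (n:ℝ) ^ ((2:ℝ) - 2*c))) := by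
            apply mul_le_mul_of_nonneg_left _ (Real.exp_pos 1).le
            exact mul_le_mul_of_nonneg_left (hsq ▸ hpowk) (by positivity)
        _ = B := by
            have hmerge2 : (n:ℝ) ^ ((d:ℝ) - 1) * (n:ℝ) ^ ((2:ℝ) - 2*c)
                = (n:ℝ) ^ ((d:ℝ) + 1 - 2*c) := by
              rw [← Real.rpow_add hn0]; congr 1; ring
            rw [hB_def]
            linear_combination (Real.exp 1 * (4 * (d:ℝ)^2)) * hmerge2
    -- sum ≤ card • B ≤ log n * B
    have hsum := Finset.sum_le_card_nsmul _ _ B hterm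
    rw [nsmul_eq_mul] at hsum
    have hcard : ((Finset.Icc 2 ⌊Real.log n⌋₊).card : ℝ) ≤ Real.log n := by
      rw [Nat.card_Icc]
      have h1 : (⌊Real.log n⌋₊ + 1 - 2 : ℕ) ≤ ⌊Real.log n⌋₊ := by omega
      exact le_trans (by exact_mod_cast h1) (Nat.floor_le hlog0)
    have : (fun n : ℕ => ∑ k ∈ Finset.Icc 2 ⌊Real.log n⌋₊,
        ((2 * d : ℕ) : ℝ) ^ k * (n : ℝ) ^ (d - 1 + k) *
          (1 - c * Real.log n / n) ^ ((k : ℝ) * ((n : ℝ) - d * Real.log n))) n ≤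
        Real.log n * B := le_trans hsum (mul_le_mul_of_nonneg_right hcard hB0)
    refine this.trans (le_of_eq ?_)
    rw [hg_def, hB_def]
    have : (n:ℝ) ^ ((d:ℝ) + 1 - 2*c) = ((n:ℝ) ^ (2*c - ((d:ℝ)+1)))⁻¹ := by
      rw [← Real.rpow_neg hn0.le]; ring_nf
    rw [this]
    field_simp
end

section
/- Fix d ≥ 2 and c > 3/2. Then the sum over k from ⌈log n⌉ to ⌊n/(3d)⌋ of n^{d−1+k} · (1 − c·log n/n)^{2kn/3} tends to 0 as n → ∞; in fact it is at most n^{−Θ(log n)} for large n. -/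
/-- For `d ≥ 2` and `c > 3/2`,
`∑_{k=⌈log n⌉}^{⌊n/(3d)⌋} n^(d-1+k) (1 - c log n / n)^(2kn/3) → 0` as `n → ∞`; in fact the
sum is at most `n^(-a log n)` for some `a > 0` and all large `n`. -/
theorem stmt_13 (d : ℕ) (hd : 2 ≤ d) (c : ℝ) (hc : 3 / 2 < c) :
    Filter.Tendsto
      (fun n : ℕ => ∑ k ∈ Finset.Icc ⌈Real.log n⌉₊ (n / (3 * d)),
        (n : ℝ) ^ (d - 1 + k) *
          (1 - c * Real.log n / n) ^ (2 * (k : ℝ) * (n : ℝ) / 3))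
      Filter.atTop (nhds 0) ∧
    ∃ a : ℝ, 0 < a ∧ ∀ᶠ n : ℕ in Filter.atTop,
      (∑ k ∈ Finset.Icc ⌈Real.log n⌉₊ (n / (3 * d)),
        (n : ℝ) ^ (d - 1 + k) *
          (1 - c * Real.log n / n) ^ (2 * (k : ℝ) * (n : ℝ) / 3)) ≤
        (n : ℝ) ^ (-(a * Real.log n)) := by
  set a : ℝ := (2 * c - 3) / 6 with ha
  have ha0 : 0 < a := by
    have : 0 < 2 * c - 3 := by linarith
    exact div_pos this (by norm_num)
  set S : ℕ → ℝ := fun n : ℕ => ∑ k ∈ Finset.Icc ⌈Real.log n⌉₊ (n / (3 * d)),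
        (n : ℝ) ^ (d - 1 + k) *
          (1 - c * Real.log n / n) ^ (2 * (k : ℝ) * (n : ℝ) / 3) with hS
  -- eventual facts
  have hlogcast : Filter.Tendsto (fun n : ℕ => Real.log n) Filter.atTop Filter.atTop :=
    Real.tendsto_log_atTop.comp tendsto_natCast_atTop_atTop
  have hdiv : Filter.Tendsto (fun n : ℕ => Real.log n / n) Filter.atTop (nhds 0) :=
    (Real.isLittleO_log_id_atTop.tendsto_div_nhds_zero).comp tendsto_natCast_atTop_atTop
  have ev1 : ∀ᶠ n : ℕ in Filter.atTop, c * (Real.log n / n) < 1 :=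
    (hdiv.const_mul c).eventually_lt_const (by simp)
  have ev2 : ∀ᶠ n : ℕ in Filter.atTop, 2 ≤ n := Filter.eventually_ge_atTop 2
  have ev3 : ∀ᶠ n : ℕ in Filter.atTop, (d : ℝ) ≤ a * Real.log n :=
    (hlogcast.const_mul_atTop ha0).eventually_ge_atTop _
  have hmain : ∀ᶠ n : ℕ in Filter.atTop,
      0 ≤ S n ∧ S n ≤ (n : ℝ) ^ (-(a * Real.log n)) := by
    filter_upwards [ev1, ev2, ev3] with n h1 h2 h3
    set L := Real.log n with hLdef
    have hn1 : 1 ≤ n := le_trans (by norm_num) h2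
    have hn0 : (0 : ℝ) < n := by exact_mod_cast Nat.lt_of_lt_of_le Nat.zero_lt_one hn1
    have hnne : (n : ℝ) ≠ 0 := ne_of_gt hn0
    have hL0 : 0 ≤ L := Real.log_natCast_nonneg n
    have hb0 : 0 ≤ 1 - c * L / n := by
      rw [mul_div_assoc]; linarith
    constructor
    · refine Finset.sum_nonneg fun k _ => mul_nonneg (pow_nonneg hn0.le _) ?_
      exact Real.rpow_nonneg hb0 _
    -- pointwise bound on each term
    have hterm : ∀ k ∈ Finset.Icc ⌈L⌉₊ (n / (3 * d)),
        (n : ℝ) ^ (d - 1 + k) * (1 - c * L / n) ^ (2 * (k : ℝ) * (n : ℝ) / 3)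
          ≤ Real.exp (L * (d - 1) - 2 * a * (L * L)) := by
      intro k hk
      have hkL : L ≤ (k : ℝ) :=
        le_trans (Nat.le_ceil L) (by exact_mod_cast (Finset.mem_Icc.1 hk).1)
      have hE0 : 0 ≤ 2 * (k : ℝ) * (n : ℝ) / 3 := by positivity
      have hbe : 1 - c * L / n ≤ Real.exp (-(c * L / n)) := by
        have := Real.add_one_le_exp (-(c * L / n)); linarith
      have h4 : (1 - c * L / n) ^ (2 * (k : ℝ) * (n : ℝ) / 3)
          ≤ Real.exp (-(c * L / n) * (2 * (k : ℝ) * (n : ℝ) / 3)) := by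
        rw [Real.exp_mul]
        exact Real.rpow_le_rpow hb0 hbe hE0
      have h5 : (n : ℝ) ^ (d - 1 + k) = Real.exp (((d - 1 + k : ℕ) : ℝ) * L) := by
        rw [← Real.rpow_natCast (n : ℝ) (d - 1 + k), Real.rpow_def_of_pos hn0]
        exact congrArg Real.exp (mul_comm _ _)
      calc (n : ℝ) ^ (d - 1 + k) * (1 - c * L / n) ^ (2 * (k : ℝ) * (n : ℝ) / 3)
          ≤ (n : ℝ) ^ (d - 1 + k) * Real.exp (-(c * L / n) * (2 * (k : ℝ) * (n : ℝ) / 3)) :=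
            mul_le_mul_of_nonneg_left h4 (pow_nonneg hn0.le _)
        _ = Real.exp (((d - 1 + k : ℕ) : ℝ) * L + -(c * L / n) * (2 * (k : ℝ) * (n : ℝ) / 3)) := by
            rw [h5, Real.exp_add]
        _ ≤ Real.exp (L * (d - 1) - 2 * a * (L * L)) := by
            apply Real.exp_le_exp.2
            have hcast : ((d - 1 + k : ℕ) : ℝ) = (d : ℝ) - 1 + k := by
              rw [Nat.cast_add, Nat.cast_sub (by omega : 1 ≤ d), Nat.cast_one]
            have hexp : -(c * L / n) * (2 * (k : ℝ) * (n : ℝ) / 3)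
                = -(2 * c / 3) * ((k : ℝ) * L) := by
              have hnn : (n : ℝ) / n = 1 := div_self hnne
              calc -(c * L / n) * (2 * (k : ℝ) * (n : ℝ) / 3)
                  = -(2 * c / 3) * ((k : ℝ) * L) * ((n : ℝ) / n) := by ring
                _ = -(2 * c / 3) * ((k : ℝ) * L) := by rw [hnn, mul_one]
            rw [hcast, hexp]
            have h2a : 2 * c / 3 - 1 = 2 * a := by rw [ha]; ring
            have hkLL : 2 * a * (L * L) ≤ 2 * a * ((k : ℝ) * L) := by
              apply mul_le_mul_of_nonneg_left _ (by linarith)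
              exact mul_le_mul_of_nonneg_right hkL hL0
            nlinarith [mul_le_mul_of_nonneg_right hkL hL0]
    have hcard : (Finset.Icc ⌈L⌉₊ (n / (3 * d))).card ≤ n := by
      rw [Nat.card_Icc]
      have h6 : 6 ≤ 3 * d := by omega
      have : n / (3 * d) ≤ n / 6 := Nat.div_le_div_left h6 (by norm_num)
      omega
    have hsum : S n ≤ (Finset.Icc ⌈L⌉₊ (n / (3 * d))).card •
        Real.exp (L * (d - 1) - 2 * a * (L * L)) :=
      Finset.sum_le_card_nsmul _ _ _ hterm
    have hsum2 : S n ≤ (n : ℝ) * Real.exp (L * (d - 1) - 2 * a * (L * L)) := by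
      refine hsum.trans ?_
      rw [nsmul_eq_mul]
      exact mul_le_mul_of_nonneg_right (by exact_mod_cast hcard) (Real.exp_pos _).le
    have hfinal : (n : ℝ) * Real.exp (L * (d - 1) - 2 * a * (L * L))
        ≤ (n : ℝ) ^ (-(a * L)) := by
      rw [Real.rpow_def_of_pos hn0, ← hLdef]
      calc (n : ℝ) * Real.exp (L * (d - 1) - 2 * a * (L * L))
          = Real.exp (L + (L * (d - 1) - 2 * a * (L * L))) := by
            rw [Real.exp_add, Real.exp_log hn0]
        _ ≤ Real.exp (L * -(a * L)) := by
            apply Real.exp_le_exp.2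
            nlinarith [mul_le_mul_of_nonneg_right h3 hL0]
    exact hsum2.trans hfinal
  refine ⟨?_, a, ha0, hmain.mono fun n h => h.2⟩
  have htends : Filter.Tendsto (fun n : ℕ => (n : ℝ) ^ (-(a * Real.log n)))
      Filter.atTop (nhds 0) := by
    have h1 : Filter.Tendsto (fun n : ℕ => Real.exp (Real.log n * -(a * Real.log n)))
        Filter.atTop (nhds 0) := by
      apply Real.tendsto_exp_atBot.comp
      have hsq : Filter.Tendsto (fun n : ℕ => a * (Real.log n * Real.log n))
          Filter.atTop Filter.atTop :=
        (hlogcast.atTop_mul_atTop₀ hlogcast).const_mul_atTop ha0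
      have h2 : Filter.Tendsto (fun n : ℕ => -(a * (Real.log n * Real.log n)))
          Filter.atTop Filter.atBot := Filter.tendsto_neg_atTop_atBot.comp hsq
      refine h2.congr fun n => ?_
      show -(a * (Real.log n * Real.log n)) = Real.log n * -(a * Real.log n)
      ring
    refine h1.congr' ?_
    filter_upwards [Filter.eventually_ge_atTop 1] with n hn
    rw [Real.rpow_def_of_pos (by exact_mod_cast Nat.lt_of_lt_of_le Nat.zero_lt_one hn)]
  exact squeeze_zero' (hmain.mono fun n h => h.1) (hmain.mono fun n h => h.2) htends
end

section
/- Let φ be a (d−1)-cochain on the full simplex on n vertices with coefficients in an abelian group R. Define w(φ) as the minimum size of the support of φ − δψ over all (d−2)-cochains ψ, and b(φ) as the number of d-faces σ of the simplex with (δφ)(σ) ≠ 0. Then b(φ) ≥ n·w(φ)/(d+1). -/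
open Finset

open Classical in
/-- The weight `w(φ)` of a `(d-1)`-cochain `φ` (values on `d`-element subsets): the
minimal support size of `φ - δψ` over all `(d-2)`-cochains `ψ`. -/
noncomputable def wgt {R : Type*} [AddCommGroup R] {n : ℕ} (d : ℕ)
    (φ : Finset (Fin n) → R) : ℕ :=
  sInf { k | ∃ ψ : Finset (Fin n) → R,
    k = (((Finset.univ : Finset (Fin n)).powersetCard d).filter
      (fun s => φ s - cobdryFun ψ s ≠ 0)).card }

open Classical in
/-- `b(φ)`: the number of `(d+1)`-element subsets on which the coboundary of `φ` is
nonzero. -/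
noncomputable def bcount {R : Type*} [AddCommGroup R] {n : ℕ} (d : ℕ)
    (φ : Finset (Fin n) → R) : ℕ :=
  (((Finset.univ : Finset (Fin n)).powersetCard (d + 1)).filter
    (fun s => cobdryFun φ s ≠ 0)).card


section Aux

variable {R : Type*} [AddCommGroup R] {n : ℕ}

/-- The cone contraction at a vertex `v`. -/
noncomputable def psiv (φ : Finset (Fin n) → R) (v : Fin n) : Finset (Fin n) → R :=
  fun τ => if v ∈ τ then 0 else isign (insert v τ) v • φ (insert v τ)

lemma pow_neg_one_arith (A B C D : ℕ) (h : C + D = A + B + 1) :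
    ((-1:ℤ)^A * (-1)^B = -((-1:ℤ)^C * (-1)^D)) := by
  rw [← pow_add, ← pow_add, h, pow_succ]; ring

lemma card_filter_insert_lt (v u : Fin n) (σ : Finset (Fin n)) (hv : v ∉ σ) :
    ((insert v σ).filter (· < u)).card
      = (σ.filter (· < u)).card + (if v < u then 1 else 0) := by
  rw [Finset.filter_insert]
  split
  · rw [Finset.card_insert_of_notMem (by simp [hv])]
  · simp

lemma card_filter_erase_lt (u w : Fin n) (σ : Finset (Fin n)) (hu : u ∈ σ) :
    ((σ.erase u).filter (· < w)).card + (if u < w then 1 else 0)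
      = (σ.filter (· < w)).card := by
  rw [Finset.filter_erase]
  by_cases h : u < w
  · rw [Finset.card_erase_of_mem (by simp [hu, h])]
    have : 0 < (σ.filter (· < w)).card := Finset.card_pos.2 ⟨u, by simp [hu, h]⟩
    simp only [h, if_true]
    omega
  · rw [Finset.erase_eq_of_notMem (by simp [h])]
    simp [h]

lemma isign_rel {σ : Finset (Fin n)} {u v : Fin n} (hv : v ∉ σ) (hu : u ∈ σ) :
    isign σ u * isign (insert v (σ.erase u)) v
      = -(isign (insert v σ) v * isign (insert v σ) u) := by
  have huv : u ≠ v := fun h => hv (h ▸ hu)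
  unfold isign
  have h2 : ((insert v (σ.erase u)).filter (· < v)).card
      = ((σ.erase u).filter (· < v)).card := by
    rw [Finset.filter_insert]; simp
  have h4 : ((insert v σ).filter (· < v)).card = (σ.filter (· < v)).card := by
    rw [Finset.filter_insert]; simp
  have h1 := card_filter_insert_lt v u σ hv
  have h3 := card_filter_erase_lt u v σ hu
  apply pow_neg_one_arith
  rw [h4, h1, h2]
  rcases lt_or_gt_of_ne huv with h | h
  · simp only [h, if_true, h.asymm, if_false] at h3 ⊢
    omega
  · simp only [h, if_true, h.asymm, if_false] at h3 ⊢
    omega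

lemma isign_smul_isign (s : Finset (Fin n)) (v : Fin n) (x : R) :
    isign s v • isign s v • x = x := by
  rw [smul_smul]
  unfold isign
  rw [← pow_add]
  rw [Even.neg_one_pow ⟨_, rfl⟩, one_smul]

lemma key_mem (φ : Finset (Fin n) → R) {v : Fin n} {σ : Finset (Fin n)} (hv : v ∈ σ) :
    φ σ - cobdryFun (psiv φ v) σ = 0 := by
  have : cobdryFun (psiv φ v) σ = φ σ := by
    unfold cobdryFun
    rw [Finset.sum_eq_single v]
    · unfold psiv
      rw [if_neg (by simp), Finset.insert_erase hv, isign_smul_isign]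
    · intro u hu huv
      unfold psiv
      rw [if_pos (Finset.mem_erase.2 ⟨Ne.symm huv, hv⟩), smul_zero]
    · intro h; exact absurd hv h
  rw [this, sub_self]

lemma key_notmem (φ : Finset (Fin n) → R) {v : Fin n} {σ : Finset (Fin n)} (hv : v ∉ σ) :
    φ σ - cobdryFun (psiv φ v) σ
      = isign (insert v σ) v • cobdryFun φ (insert v σ) := by
  unfold cobdryFun
  rw [Finset.sum_insert hv, smul_add, Finset.erase_insert hv, isign_smul_isign,
    Finset.smul_sum]
  have : ∑ u ∈ σ, isign σ u • psiv φ v (σ.erase u)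
      = -∑ u ∈ σ, isign (insert v σ) v • isign (insert v σ) u •
          φ ((insert v σ).erase u) := by
    rw [← Finset.sum_neg_distrib]
    refine Finset.sum_congr rfl (fun u hu => ?_)
    have huv : u ≠ v := fun h => hv (h ▸ hu)
    have hvnot : v ∉ σ.erase u := fun h => hv (Finset.mem_of_mem_erase h)
    unfold psiv
    rw [if_neg hvnot, smul_smul, smul_smul, isign_rel hv hu,
      Finset.erase_insert_of_ne huv.symm, neg_smul]
  rw [this]
  abel

end Aux

/-- Meshulam–Wallach coisoperimetric inequality.  For any abelian group
`R` and any `(d-1)`-cochain `φ` of the simplex on `n` vertices,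
`b(φ) ≥ n w(φ) / (d+1)`. -/

theorem stmt_14 (R : Type*) [AddCommGroup R] (n d : ℕ) (hd : 1 ≤ d)
    (φ : Finset (Fin n) → R) :
    n * wgt d φ ≤ (d + 1) * bcount d φ := by
  classical
  set B : Finset (Finset (Fin n)) :=
    ((Finset.univ : Finset (Fin n)).powersetCard (d + 1)).filter
      (fun s => cobdryFun φ s ≠ 0) with hBdef
  have hb : bcount d φ = B.card := by
    unfold bcount; rw [hBdef]
  have step1 : ∀ v : Fin n, wgt d φ ≤ (B.filter (fun s => v ∈ s)).card := by
    intro v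
    have hmem : (((Finset.univ : Finset (Fin n)).powersetCard d).filter
        (fun σ => φ σ - cobdryFun (psiv φ v) σ ≠ 0)).card ∈
        { k | ∃ ψ : Finset (Fin n) → R,
          k = (((Finset.univ : Finset (Fin n)).powersetCard d).filter
            (fun s => φ s - cobdryFun ψ s ≠ 0)).card } := ⟨psiv φ v, rfl⟩
    refine (Nat.sInf_le hmem).trans ?_
    apply Finset.card_le_card_of_injOn (fun σ => insert v σ)
    · intro σ hσ
      simp only [Finset.mem_coe, Finset.mem_filter, Finset.mem_powersetCard_univ] at hσ
      have hv : v ∉ σ := by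
        intro h
        exact hσ.2 (key_mem φ h)
      have hne : cobdryFun φ (insert v σ) ≠ 0 := by
        intro h
        apply hσ.2
        rw [key_notmem φ hv, h, smul_zero]
      simp only [hBdef, Finset.mem_coe, Finset.mem_filter, Finset.mem_powersetCard_univ]
      exact ⟨⟨by rw [Finset.card_insert_of_notMem hv, hσ.1], hne⟩,
        Finset.mem_insert_self v σ⟩
    · intro σ₁ h₁ σ₂ h₂ h
      simp only [Finset.coe_filter, Set.mem_setOf_eq, Finset.mem_powersetCard_univ]
        at h₁ h₂
      have hv₁ : v ∉ σ₁ := fun hv => h₁.2 (key_mem φ hv)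
      have hv₂ : v ∉ σ₂ := fun hv => h₂.2 (key_mem φ hv)
      have := congrArg (fun s => Finset.erase s v) h
      simpa [Finset.erase_insert hv₁, Finset.erase_insert hv₂] using this
  have step2 : ∑ v : Fin n, (B.filter (fun s => v ∈ s)).card = (d + 1) * B.card := by
    have h1 : ∀ v : Fin n, (B.filter (fun s => v ∈ s)).card
        = ∑ s ∈ B, if v ∈ s then 1 else 0 := fun v => Finset.card_filter _ _
    simp_rw [h1]
    rw [Finset.sum_comm]
    have h2 : ∀ s ∈ B, (∑ v : Fin n, if v ∈ s then 1 else 0) = d + 1 := by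
      intro s hs
      simp only [hBdef, Finset.mem_filter, Finset.mem_powersetCard_univ] at hs
      rw [Finset.sum_ite_mem, Finset.univ_inter, Finset.sum_const, smul_eq_mul,
        mul_one, hs.1]
    rw [Finset.sum_congr rfl h2, Finset.sum_const, smul_eq_mul, Nat.mul_comm]
  calc n * wgt d φ = ∑ _v : Fin n, wgt d φ := by
        rw [Finset.sum_const, Finset.card_univ, Fintype.card_fin, smul_eq_mul]
    _ ≤ ∑ v : Fin n, (B.filter (fun s => v ∈ s)).card :=
        Finset.sum_le_sum (fun v _ => step1 v)
    _ = (d + 1) * bcount d φ := by rw [step2, hb]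
end

section
/- Fix d ≥ 2 and reals 0 < θ_0 ≤ 1 and δ > 0, and let ε = 1/(2d²). There is a constant C = C(d) such that for all sufficiently large n the following holds: for every (d−1)-dimensional subcomplex X of the simplex on n vertices with |X| = k ≥ δn facets satisfying β(X) ≤ (1−θ)k(n−d) for some θ ≥ θ_0, there exists S ⊆ X with |S| ≤ C·k/n such that the set Γ(S) = {τ ∈ X : |τ ∩ σ| = d−1 for some σ ∈ S} has size at least (1−ε)θk. -/
/-- `β(X)` for a family `X` of `d`-element subsets of `Fin n` (the facets of a
`(d-1)`-dimensional complex): the number of `(d+1)`-element subsets of `Fin n` containing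
exactly one member of `X`. -/
def betaX (n d : ℕ) (X : Finset (Finset (Fin n))) : ℕ :=
  (((Finset.univ : Finset (Fin n)).powersetCard (d + 1)).filter
    (fun τ => (X.filter (fun s => s ⊆ τ)).card = 1)).card

namespace Stmt18Aux

open Finset

def nbr (n d : ℕ) (X : Finset (Finset (Fin n))) (ρ : Finset (Fin n)) : Finset (Finset (Fin n)) :=
  X.filter (fun τ => (τ ∩ ρ).card = d - 1)

def cov (n d : ℕ) (X S : Finset (Finset (Fin n))) : Finset (Finset (Fin n)) :=
  X.filter (fun τ => ∃ σ ∈ S, (τ ∩ σ).card = d - 1)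

lemma cov_insert (n d : ℕ) (X S : Finset (Finset (Fin n))) (ρ : Finset (Fin n)) :
    cov n d X (insert ρ S) = cov n d X S ∪ nbr n d X ρ := by
  ext τ
  simp only [cov, nbr, mem_filter, mem_union, mem_insert]
  constructor
  · rintro ⟨hτ, σ, (rfl | hσ), h⟩
    · exact Or.inr ⟨hτ, h⟩
    · exact Or.inl ⟨hτ, σ, hσ, h⟩
  · rintro (⟨hτ, σ, hσ, h⟩ | ⟨hτ, h⟩)
    · exact ⟨hτ, σ, Or.inr hσ, h⟩
    · exact ⟨hτ, ρ, Or.inl rfl, h⟩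

lemma sum_nbr_inter (n d : ℕ) (X U : Finset (Finset (Fin n))) (hU : U ⊆ X) :
    ∑ σ ∈ U, (nbr n d X σ).card = ∑ ρ ∈ X, (nbr n d X ρ ∩ U).card := by
  have h1 : ∀ ρ, nbr n d X ρ ∩ U = U.filter (fun σ => (σ ∩ ρ).card = d - 1) := by
    intro ρ; ext σ
    simp only [nbr, mem_inter, mem_filter]
    exact ⟨fun h => ⟨h.2, h.1.2⟩, fun h => ⟨⟨hU h.1, h.2⟩, h.1⟩⟩
  have h2 : ∀ σ, nbr n d X σ = X.filter (fun ρ => (σ ∩ ρ).card = d - 1) := by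
    intro σ
    unfold nbr
    apply filter_congr
    intro ρ _
    rw [inter_comm]
  calc ∑ σ ∈ U, (nbr n d X σ).card
      = ∑ σ ∈ U, ∑ ρ ∈ X, (if (σ ∩ ρ).card = d - 1 then 1 else 0) := by
        refine sum_congr rfl fun σ _ => ?_
        rw [h2 σ, card_filter]
    _ = ∑ ρ ∈ X, ∑ σ ∈ U, (if (σ ∩ ρ).card = d - 1 then 1 else 0) := sum_comm
    _ = ∑ ρ ∈ X, (nbr n d X ρ ∩ U).card := by
        refine sum_congr rfl fun ρ _ => ?_
        rw [h1 ρ, card_filter]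

lemma greedy (n d : ℕ) (X G : Finset (Finset (Fin n))) (hG : G ⊆ X)
    (Dn : ℕ) (hdeg : ∀ σ ∈ G, Dn ≤ (nbr n d X σ).card) (u : ℕ) :
    ∀ t : ℕ, ∃ S ⊆ X, S.card ≤ t ∧
      ((G \ cov n d X S).card ≤ u ∨
       (G \ cov n d X S).card * X.card + t * ((u + 1) * Dn) ≤ X.card * X.card) := by
  intro t
  induction t with
  | zero =>
    refine ⟨∅, empty_subset _, le_refl _, Or.inr ?_⟩
    simp only [Nat.zero_mul, Nat.add_zero]
    exact Nat.mul_le_mul_right _ (card_le_card (sdiff_subset.trans hG))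
  | succ t ih =>
    obtain ⟨S, hSX, hScard, hS⟩ := ih
    by_cases hle : (G \ cov n d X S).card ≤ u
    · exact ⟨S, hSX, hScard.trans (Nat.le_succ t), Or.inl hle⟩
    rcases hS with h | hright
    · exact absurd h hle
    push_neg at hle
    set U := G \ cov n d X S with hUdef
    have hUX : U ⊆ X := sdiff_subset.trans hG
    have hUne : U.Nonempty := card_pos.mp (by omega)
    have hXne : X.Nonempty := ⟨hUne.choose, hUX hUne.choose_spec⟩
    have hsum : U.card * Dn ≤ ∑ ρ ∈ X, (nbr n d X ρ ∩ U).card := by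
      calc U.card * Dn = ∑ _σ ∈ U, Dn := by rw [sum_const, smul_eq_mul]
        _ ≤ ∑ σ ∈ U, (nbr n d X σ).card :=
            sum_le_sum fun σ hσ => hdeg σ (mem_sdiff.mp hσ).1
        _ = ∑ ρ ∈ X, (nbr n d X ρ ∩ U).card := sum_nbr_inter n d X U hUX
    obtain ⟨ρ, hρX, hρmax⟩ := X.exists_max_image (fun ρ => (nbr n d X ρ ∩ U).card) hXne
    set g := (nbr n d X ρ ∩ U).card with hgdef
    have hmax : ∑ ρ' ∈ X, (nbr n d X ρ' ∩ U).card ≤ X.card * g := by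
      calc ∑ ρ' ∈ X, (nbr n d X ρ' ∩ U).card ≤ ∑ _ρ' ∈ X, g :=
            sum_le_sum fun a ha => hρmax a ha
        _ = X.card * g := by rw [sum_const, smul_eq_mul]
    have hkey : (u + 1) * Dn ≤ g * X.card := by
      calc (u + 1) * Dn ≤ U.card * Dn := Nat.mul_le_mul_right _ (by omega)
        _ ≤ X.card * g := hsum.trans hmax
        _ = g * X.card := Nat.mul_comm _ _
    refine ⟨insert ρ S, insert_subset hρX hSX,
      (card_insert_le _ _).trans (Nat.succ_le_succ hScard), Or.inr ?_⟩
    have hcov : G \ cov n d X (insert ρ S) ⊆ U \ nbr n d X ρ := by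
      rw [cov_insert]
      intro τ hτ
      rw [mem_sdiff] at hτ ⊢
      rw [mem_union] at hτ
      exact ⟨mem_sdiff.mpr ⟨hτ.1, fun h => hτ.2 (Or.inl h)⟩, fun h => hτ.2 (Or.inr h)⟩
    have hUsplit : (U ∩ nbr n d X ρ).card + (U \ nbr n d X ρ).card = U.card :=
      card_inter_add_card_sdiff U (nbr n d X ρ)
    have hgU : g = (U ∩ nbr n d X ρ).card := by rw [hgdef, inter_comm]
    have hcard : (G \ cov n d X (insert ρ S)).card ≤ U.card - g := by
      refine (card_le_card hcov).trans ?_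
      omega
    have hg_le : g ≤ U.card := by omega
    have h1 : (G \ cov n d X (insert ρ S)).card * X.card ≤ (U.card - g) * X.card :=
      Nat.mul_le_mul_right _ hcard
    have h2 : (U.card - g) * X.card + (u + 1) * Dn ≤ U.card * X.card := by
      calc (U.card - g) * X.card + (u + 1) * Dn
          ≤ (U.card - g) * X.card + g * X.card := Nat.add_le_add_left hkey _
        _ = (U.card - g + g) * X.card := (Nat.add_mul _ _ _).symm
        _ = U.card * X.card := by rw [Nat.sub_add_cancel hg_le]
    calc (G \ cov n d X (insert ρ S)).card * X.card + (t + 1) * ((u + 1) * Dn)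
        = ((G \ cov n d X (insert ρ S)).card * X.card + (u + 1) * Dn) + t * ((u + 1) * Dn) := by
          ring
      _ ≤ ((U.card - g) * X.card + (u + 1) * Dn) + t * ((u + 1) * Dn) :=
          Nat.add_le_add_right (Nat.add_le_add_right h1 _) _
      _ ≤ U.card * X.card + t * ((u + 1) * Dn) := Nat.add_le_add_right h2 _
      _ ≤ X.card * X.card := hright

def rich (n d : ℕ) (X : Finset (Finset (Fin n))) (σ : Finset (Fin n)) (v : Fin n) : Prop :=
  ∃ σ' ∈ X, σ' ≠ σ ∧ σ' ⊆ insert v σ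

instance (n d : ℕ) (X : Finset (Finset (Fin n))) (σ : Finset (Fin n)) :
    DecidablePred (rich n d X σ) := fun _ => by unfold rich; infer_instance

lemma rich_witness (n d : ℕ) (X : Finset (Finset (Fin n))) (hX : ∀ s ∈ X, s.card = d)
    (σ : Finset (Fin n)) (hσ : σ ∈ X) (v : Fin n) (hv : v ∉ σ)
    (σ' : Finset (Fin n)) (h1 : σ' ∈ X) (h2 : σ' ≠ σ) (h3 : σ' ⊆ insert v σ) :
    v ∈ σ' ∧ (σ' ∩ σ).card = d - 1 := by
  have hvmem : v ∈ σ' := by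
    by_contra hvn
    have hsub : σ' ⊆ σ := by
      intro x hx
      rcases mem_insert.mp (h3 hx) with rfl | hxσ
      · exact absurd hx hvn
      · exact hxσ
    exact h2 (eq_of_subset_of_card_le hsub (by rw [hX σ hσ, hX σ' h1]))
  refine ⟨hvmem, ?_⟩
  have : σ' ∩ σ = σ'.erase v := by
    ext x
    simp only [mem_inter, mem_erase]
    constructor
    · rintro ⟨hx1, hx2⟩
      exact ⟨fun hxv => hv (hxv ▸ hx2), hx1⟩
    · rintro ⟨hxv, hx1⟩
      refine ⟨hx1, ?_⟩
      rcases mem_insert.mp (h3 hx1) with rfl | hxσ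
      · exact absurd rfl hxv
      · exact hxσ
  rw [this, card_erase_of_mem hvmem, hX σ' h1]

lemma rich_card_le (n d : ℕ) (X : Finset (Finset (Fin n))) (hX : ∀ s ∈ X, s.card = d)
    (σ : Finset (Fin n)) (hσ : σ ∈ X) :
    ((univ \ σ).filter (rich n d X σ)).card ≤ (nbr n d X σ).card := by
  classical
  set F : Fin n → Finset (Fin n) :=
    fun v => if h : rich n d X σ v then h.choose else ∅ with hF
  apply card_le_card_of_injOn F
  · intro v hv
    have hvm := mem_filter.mp hv
    have hvσ : v ∉ σ := (mem_sdiff.mp hvm.1).2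
    have hr := hvm.2
    obtain ⟨h1, h2, h3⟩ := hr.choose_spec
    have hw := rich_witness n d X hX σ hσ v hvσ _ h1 h2 h3
    simp only [hF, dif_pos hr]
    exact mem_filter.mpr ⟨h1, hw.2⟩
  · intro v₁ hv₁ v₂ hv₂ heq
    simp only [coe_filter, Set.mem_setOf_eq] at hv₁ hv₂
    have hv₁σ : v₁ ∉ σ := (mem_sdiff.mp hv₁.1).2
    have hv₂σ : v₂ ∉ σ := (mem_sdiff.mp hv₂.1).2
    have hr₁ := hv₁.2; have hr₂ := hv₂.2
    obtain ⟨h11, h12, h13⟩ := hr₁.choose_spec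
    obtain ⟨h21, h22, h23⟩ := hr₂.choose_spec
    have hw₁ := rich_witness n d X hX σ hσ v₁ hv₁σ _ h11 h12 h13
    simp only [hF, dif_pos hr₁, dif_pos hr₂] at heq
    have : v₁ ∈ insert v₂ σ := h23 (heq ▸ hw₁.1)
    rcases mem_insert.mp this with h | h
    · exact h
    · exact absurd h hv₁σ

lemma nonrich_sum_le_beta (n d : ℕ) (X : Finset (Finset (Fin n))) (hX : ∀ s ∈ X, s.card = d)
    (A : Finset (Finset (Fin n))) (hA : A ⊆ X) :
    ∑ σ ∈ A, ((univ \ σ).filter (fun v => ¬ rich n d X σ v)).card ≤ betaX n d X := by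
  classical
  set T : Finset (Fin n) → Finset (Finset (Fin n)) :=
    fun σ => ((univ \ σ).filter (fun v => ¬ rich n d X σ v)).image (fun v => insert v σ) with hT
  have hinj : ∀ σ : Finset (Fin n),
      Set.InjOn (fun v => insert v σ) ((univ \ σ).filter (fun v => ¬ rich n d X σ v)) := by
    intro σ v₁ hv₁ v₂ hv₂ heq
    simp only [coe_filter, Set.mem_setOf_eq] at hv₁ hv₂
    have hv₁σ : v₁ ∉ σ := (mem_sdiff.mp hv₁.1).2
    have hmm : v₁ ∈ insert v₂ σ := by
      have h0 : v₁ ∈ insert v₁ σ := mem_insert_self v₁ σ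
      rwa [show insert v₁ σ = insert v₂ σ from heq] at h0
    rcases mem_insert.mp hmm with h | h
    · exact h
    · exact absurd h hv₁σ
  have hcardT : ∀ σ ∈ A,
      ((univ \ σ).filter (fun v => ¬ rich n d X σ v)).card = (T σ).card := by
    intro σ _
    exact (card_image_of_injOn (hinj σ)).symm
  rw [Finset.sum_congr rfl hcardT]
  have hdisj : ∀ σ₁ ∈ A, ∀ σ₂ ∈ A, σ₁ ≠ σ₂ → Disjoint (T σ₁) (T σ₂) := by
    intro σ₁ h₁ σ₂ h₂ hne
    rw [disjoint_left]
    intro τ hτ₁ hτ₂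
    simp only [hT, mem_image, mem_filter, mem_sdiff] at hτ₁ hτ₂
    obtain ⟨v₁, ⟨⟨_, hv₁σ⟩, hnr₁⟩, hins₁⟩ := hτ₁
    obtain ⟨v₂, ⟨⟨_, _⟩, _⟩, hins₂⟩ := hτ₂
    exact hnr₁ ⟨σ₂, hA h₂, fun h => hne h.symm, by rw [hins₁, ← hins₂]; exact subset_insert _ _⟩
  rw [← card_biUnion hdisj]
  unfold betaX
  apply card_le_card
  intro τ hτ
  obtain ⟨σ, hσA, hτT⟩ := mem_biUnion.mp hτ
  simp only [hT, mem_image, mem_filter, mem_sdiff] at hτT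
  obtain ⟨v, ⟨⟨_, hvσ⟩, hnr⟩, rfl⟩ := hτT
  rw [mem_filter, mem_powersetCard]
  refine ⟨⟨subset_univ _, by rw [card_insert_of_notMem hvσ, hX σ (hA hσA)]⟩, ?_⟩
  rw [card_eq_one]
  refine ⟨σ, ?_⟩
  ext σ'
  simp only [mem_filter, mem_singleton]
  constructor
  · rintro ⟨hσ'X, hσ'sub⟩
    by_contra hne
    exact hnr ⟨σ', hσ'X, hne, hσ'sub⟩
  · rintro rfl
    exact ⟨hA hσA, subset_insert _ _⟩

end Stmt18Aux

open Finset Stmt18Aux in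
set_option maxHeartbeats 2000000 in
/-- Meshulam–Wallach Claim 4.2.  Fix `d ≥ 2`, `θ₀ ∈ (0,1]`, `δ > 0` and
`ε = 1/(2d²)`.  For some `C = C(d)` and all large `n`: every family `X` of `d`-sets with
`|X| = k ≥ δ n` and `β(X) ≤ (1-θ) k (n-d)` for some `θ ∈ [θ₀, 1]` admits `S ⊆ X` with
`|S| ≤ C k / n` whose neighbourhood `Γ(S) = {τ ∈ X : |τ ∩ σ| = d-1 for some σ ∈ S}` has
size at least `(1-ε) θ k`. -/
theorem stmt_18 (d : ℕ) (hd : 2 ≤ d) (θ₀ δ : ℝ) (hθ₀ : 0 < θ₀) (hθ₀1 : θ₀ ≤ 1)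
    (hδ : 0 < δ) :
    ∃ C : ℝ, 0 < C ∧ ∃ n₀ : ℕ, ∀ n ≥ n₀, ∀ X : Finset (Finset (Fin n)),
      (∀ s ∈ X, s.card = d) →
      ∀ θ : ℝ, θ₀ ≤ θ → θ ≤ 1 →
      δ * n ≤ X.card →
      (betaX n d X : ℝ) ≤ (1 - θ) * X.card * ((n : ℝ) - d) →
      ∃ S ⊆ X, (S.card : ℝ) ≤ C * X.card / n ∧
        (1 - 1 / (2 * (d : ℝ) ^ 2)) * θ * X.card ≤
          ((X.filter (fun τ => ∃ σ ∈ S, (τ ∩ σ).card = d - 1)).card : ℝ) := by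
  classical
  refine ⟨32 * (d : ℝ) ^ 4 / θ₀ ^ 2 + 1 / δ,
    add_pos_of_nonneg_of_pos (by positivity) (by positivity), 2 * d, ?_⟩
  intro n hn X hX θ hθl hθu hk hβ
  have hd2 : (2 : ℝ) ≤ (d : ℝ) := by exact_mod_cast hd
  have hdpos : (0 : ℝ) < d := by linarith
  have hnd : d < n := by omega
  have hN : (0 : ℝ) < (n : ℝ) - d := by
    have h0 : (d : ℝ) < n := by exact_mod_cast hnd
    linarith
  have hnpos : (0 : ℝ) < n := by
    have h0 : 0 < n := by omega
    exact_mod_cast h0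
  have hθpos : 0 < θ := lt_of_lt_of_le hθ₀ hθl
  obtain ⟨k, hkdef⟩ : ∃ k : ℕ, k = X.card := ⟨_, rfl⟩
  rw [← hkdef] at hk hβ ⊢
  have hkpos : (0 : ℝ) < k := lt_of_lt_of_le (mul_pos hδ hnpos) hk
  obtain ⟨b, hbdef⟩ : ∃ b : ℝ, b = 1 / (4 * (d : ℝ) ^ 2) := ⟨_, rfl⟩
  have hbpos : 0 < b := by
    rw [hbdef]
    exact div_pos one_pos (by nlinarith)
  have hble : b ≤ 1 / 16 := by
    rw [hbdef, div_le_div_iff₀ (by nlinarith) (by norm_num)]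
    nlinarith
  obtain ⟨Dn, hDndef⟩ : ∃ Dn : ℕ, Dn = ⌈θ * ((n : ℝ) - d) * b⌉₊ := ⟨_, rfl⟩
  have hDn1 : 1 ≤ Dn := by
    rw [hDndef]
    exact Nat.one_le_ceil_iff.mpr (mul_pos (mul_pos hθpos hN) hbpos)
  obtain ⟨G, hGdef⟩ : ∃ G, G = X.filter (fun σ => Dn ≤ (nbr n d X σ).card) := ⟨_, rfl⟩
  have hGsub : G ⊆ X := hGdef ▸ filter_subset _ _
  obtain ⟨A, hAdef⟩ : ∃ A, A = X \ G := ⟨_, rfl⟩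
  have hAsub : A ⊆ X := hAdef ▸ sdiff_subset
  -- Markov: A is small
  have hperA : ∀ σ ∈ A,
      ((n : ℝ) - d) * (1 - θ * b) ≤
        (((univ \ σ).filter (fun v => ¬ rich n d X σ v)).card : ℝ) := by
    intro σ hσ
    have hσX : σ ∈ X := hAsub hσ
    have hσG : σ ∉ G := by
      rw [hAdef] at hσ
      exact (mem_sdiff.mp hσ).2
    have hdeglt : ((nbr n d X σ).card : ℝ) < θ * ((n : ℝ) - d) * b := by
      rw [hGdef, mem_filter] at hσG
      push_neg at hσG
      have h0 : (nbr n d X σ).card < Dn := hσG hσX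
      rw [hDndef] at h0
      exact Nat.lt_ceil.mp h0
    have hrle := rich_card_le n d X hX σ hσX
    have hsplit : ((univ \ σ).filter (rich n d X σ)).card +
        ((univ \ σ).filter (fun v => ¬ rich n d X σ v)).card = n - d := by
      rw [card_filter_add_card_filter_not, card_sdiff_of_subset (subset_univ σ), card_univ,
        Fintype.card_fin, hX σ hσX]
    have hcast : (((univ \ σ).filter (rich n d X σ)).card : ℝ) +
        (((univ \ σ).filter (fun v => ¬ rich n d X σ v)).card : ℝ) = (n : ℝ) - d := by
      have h0 := congrArg (fun m : ℕ => (m : ℝ)) hsplit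
      push_cast [Nat.cast_sub (le_of_lt hnd)] at h0
      exact h0
    have hrich_lt : (((univ \ σ).filter (rich n d X σ)).card : ℝ) < θ * ((n : ℝ) - d) * b :=
      lt_of_le_of_lt (by exact_mod_cast hrle) hdeglt
    nlinarith
  have hsumA := nonrich_sum_le_beta n d X hX A hAsub
  have hMarkov : (A.card : ℝ) * (((n : ℝ) - d) * (1 - θ * b)) ≤ (1 - θ) * k * ((n : ℝ) - d) := by
    calc (A.card : ℝ) * (((n : ℝ) - d) * (1 - θ * b))
        ≤ ∑ σ ∈ A, (((univ \ σ).filter (fun v => ¬ rich n d X σ v)).card : ℝ) := by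
          have h0 := Finset.card_nsmul_le_sum A
            (fun σ => (((univ \ σ).filter (fun v => ¬ rich n d X σ v)).card : ℝ))
            (((n : ℝ) - d) * (1 - θ * b)) hperA
          simpa [nsmul_eq_mul] using h0
      _ = ((∑ σ ∈ A, ((univ \ σ).filter (fun v => ¬ rich n d X σ v)).card : ℕ) : ℝ) := by
          push_cast; ring
      _ ≤ (betaX n d X : ℝ) := by exact_mod_cast hsumA
      _ ≤ (1 - θ) * k * ((n : ℝ) - d) := hβ
  have hθb : θ * b ≤ 1 / 16 := by nlinarith
  have hAcard : (A.card : ℝ) * (1 - θ * b) ≤ (1 - θ) * k := by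
    have h2 : ((A.card : ℝ) * (1 - θ * b)) * ((n : ℝ) - d) ≤ ((1 - θ) * k) * ((n : ℝ) - d) := by
      calc ((A.card : ℝ) * (1 - θ * b)) * ((n : ℝ) - d)
          = (A.card : ℝ) * (((n : ℝ) - d) * (1 - θ * b)) := by ring
        _ ≤ (1 - θ) * k * ((n : ℝ) - d) := hMarkov
        _ = ((1 - θ) * k) * ((n : ℝ) - d) := by ring
    exact le_of_mul_le_mul_right h2 hN
  have hAG : (A.card : ℝ) = (k : ℝ) - G.card := by
    have hGk : G.card ≤ k := hkdef ▸ card_le_card hGsub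
    rw [hAdef, card_sdiff_of_subset hGsub, ← hkdef, Nat.cast_sub hGk]
  have hGcard : (1 - b) * θ * k ≤ (G.card : ℝ) := by
    have hGnn : (0 : ℝ) ≤ G.card := Nat.cast_nonneg _
    have h1 : ((k : ℝ) - (G.card : ℝ)) * (1 - θ * b) ≤ (1 - θ) * (k : ℝ) := by
      rw [← hAG]; exact hAcard
    have h1' : (k : ℝ) - θ * b * k - (G.card : ℝ) + θ * b * (G.card : ℝ) ≤ (1 - θ) * k := by
      linear_combination h1
    have h2 : (0 : ℝ) ≤ θ * b * (G.card : ℝ) :=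
      mul_nonneg (mul_nonneg hθpos.le hbpos.le) hGnn
    linarith
  -- greedy covering
  obtain ⟨u, hudef⟩ : ∃ u : ℕ, u = ⌊θ * k * b⌋₊ := ⟨_, rfl⟩
  obtain ⟨m, hmdef⟩ : ∃ m : ℕ, m = (u + 1) * Dn := ⟨_, rfl⟩
  obtain ⟨t, htdef⟩ : ∃ t : ℕ, t = k * k / m + 1 := ⟨_, rfl⟩
  have hm1 : 0 < m := hmdef ▸ Nat.mul_pos (Nat.succ_pos u) hDn1
  obtain ⟨S, hSX, hScard, hSres⟩ := greedy n d X G hGsub Dn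
    (fun σ hσ => by
      rw [hGdef] at hσ
      exact (mem_filter.mp hσ).2) u t
  rw [← hkdef, ← hmdef] at hSres
  have htm : k * k < t * m := by
    rw [htdef]
    exact (Nat.div_lt_iff_lt_mul hm1).mp (Nat.lt_succ_self _)
  have hcovres : (G \ cov n d X S).card ≤ u := by
    rcases hSres with h | h
    · exact h
    · exact absurd (lt_of_lt_of_le htm (le_trans (Nat.le_add_left _ _) h)) (lt_irrefl _)
  refine ⟨S, hSX, ?_, ?_⟩
  · -- size bound
    have hScast : (S.card : ℝ) ≤ (t : ℝ) := by exact_mod_cast hScard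
    have hmpos : (0 : ℝ) < m := by exact_mod_cast hm1
    have ht_real : (t : ℝ) ≤ (k : ℝ) * k / (m : ℝ) + 1 := by
      rw [htdef]
      push_cast
      have h := Nat.cast_div_le (α := ℝ) (m := k * k) (n := m)
      push_cast at h
      linarith
    have hu1 : θ * k * b ≤ ((u : ℝ) + 1) := by
      rw [hudef]
      exact le_of_lt (Nat.lt_floor_add_one _)
    have hDnr : θ * ((n : ℝ) - d) * b ≤ (Dn : ℝ) := hDndef ▸ Nat.le_ceil _
    have hm_real : (θ * k * b) * (θ * ((n : ℝ) - d) * b) ≤ (m : ℝ) := by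
      rw [hmdef]
      push_cast
      have h2 : (0 : ℝ) ≤ θ * ((n : ℝ) - d) * b := le_of_lt (mul_pos (mul_pos hθpos hN) hbpos)
      have h3 : (0 : ℝ) ≤ (u : ℝ) + 1 := by positivity
      exact mul_le_mul hu1 hDnr h2 h3
    have hhalf : (n : ℝ) / 2 ≤ (n : ℝ) - d := by
      have h2 : (2 * d : ℝ) ≤ n := by exact_mod_cast hn
      linarith
    have hmBig : θ₀ ^ 2 * b ^ 2 * (k : ℝ) * ((n : ℝ) / 2) ≤ (m : ℝ) := by
      have e1 : (θ * k * b) * (θ * ((n : ℝ) - d) * b) = θ ^ 2 * b ^ 2 * k * ((n : ℝ) - d) := by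
        ring
      have h3 : θ₀ ^ 2 ≤ θ ^ 2 := pow_le_pow_left₀ hθ₀.le hθl 2
      have h4 : θ₀ ^ 2 * b ^ 2 * (k : ℝ) * ((n : ℝ) / 2) ≤ θ₀ ^ 2 * b ^ 2 * (k : ℝ) * ((n : ℝ) - d) := by
        have h0 : (0:ℝ) ≤ θ₀ ^ 2 * b ^ 2 * k := by positivity
        exact mul_le_mul_of_nonneg_left hhalf h0
      have hnn : (0:ℝ) ≤ b ^ 2 * (k : ℝ) * ((n : ℝ) - d) :=
        mul_nonneg (mul_nonneg (sq_nonneg b) (Nat.cast_nonneg _)) hN.le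
      have h5 : θ₀ ^ 2 * b ^ 2 * (k : ℝ) * ((n : ℝ) - d) ≤ θ ^ 2 * b ^ 2 * (k : ℝ) * ((n : ℝ) - d) := by
        calc θ₀ ^ 2 * b ^ 2 * (k : ℝ) * ((n : ℝ) - d)
            = θ₀ ^ 2 * (b ^ 2 * (k : ℝ) * ((n : ℝ) - d)) := by ring
          _ ≤ θ ^ 2 * (b ^ 2 * (k : ℝ) * ((n : ℝ) - d)) :=
              mul_le_mul_of_nonneg_right h3 hnn
          _ = θ ^ 2 * b ^ 2 * (k : ℝ) * ((n : ℝ) - d) := by ring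
      linarith [hm_real, e1 ▸ hm_real]
    rw [le_div_iff₀ hnpos]
    have hterm1 : (k : ℝ) * k / (m : ℝ) * n ≤ 32 * (d : ℝ) ^ 4 / θ₀ ^ 2 * k := by
      rw [div_mul_eq_mul_div, div_le_iff₀ hmpos]
      calc (k : ℝ) * k * n
          = 32 * (d : ℝ) ^ 4 / θ₀ ^ 2 * k * (θ₀ ^ 2 * b ^ 2 * (k : ℝ) * ((n : ℝ) / 2)) := by
            rw [hbdef]
            field_simp
            ring
        _ ≤ 32 * (d : ℝ) ^ 4 / θ₀ ^ 2 * k * m := by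
            have h0 : (0:ℝ) ≤ 32 * (d : ℝ) ^ 4 / θ₀ ^ 2 * k := by positivity
            exact mul_le_mul_of_nonneg_left hmBig h0
    have hterm2 : (n : ℝ) ≤ 1 / δ * k := by
      rw [div_mul_eq_mul_div, le_div_iff₀ hδ]
      linarith [hk]
    calc (S.card : ℝ) * n ≤ (t : ℝ) * n :=
          mul_le_mul_of_nonneg_right hScast (le_of_lt hnpos)
      _ ≤ ((k : ℝ) * k / (m : ℝ) + 1) * n :=
          mul_le_mul_of_nonneg_right ht_real (le_of_lt hnpos)
      _ = (k : ℝ) * k / (m : ℝ) * n + n := by ring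
      _ ≤ 32 * (d : ℝ) ^ 4 / θ₀ ^ 2 * k + 1 / δ * k := add_le_add hterm1 hterm2
      _ = (32 * (d : ℝ) ^ 4 / θ₀ ^ 2 + 1 / δ) * k := by ring
  · -- coverage bound
    have hsplitG : (G ∩ cov n d X S).card + (G \ cov n d X S).card = G.card :=
      card_inter_add_card_sdiff _ _
    have hGle : G.card ≤ (cov n d X S).card + u := by
      have h2 : (G ∩ cov n d X S).card ≤ (cov n d X S).card :=
        card_le_card inter_subset_right
      calc G.card = (G ∩ cov n d X S).card + (G \ cov n d X S).card := hsplitG.symm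
        _ ≤ (cov n d X S).card + u := Nat.add_le_add h2 hcovres
    have hGler : (G.card : ℝ) ≤ ((cov n d X S).card : ℝ) + u := by exact_mod_cast hGle
    have hu_real : (u : ℝ) ≤ θ * k * b := by
      rw [hudef]
      exact Nat.floor_le (le_of_lt (mul_pos (mul_pos hθpos hkpos) hbpos))
    have h2b : 1 / (2 * (d : ℝ) ^ 2) = 2 * b := by
      rw [hbdef]
      field_simp
      ring
    show (1 - 1 / (2 * (d : ℝ) ^ 2)) * θ * k ≤ ((cov n d X S).card : ℝ)
    rw [h2b]
    nlinarith [hGcard, hGler, hu_real]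
end
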